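/- arXiv:1509.05621 — 10 statements merged into one kernel-verified Lean document; each statement's English description precedes it below -/
import Mathlib

section
/- If a complete edge-colored graph has no colorful m-cycle and no colorful n-cycle (m, n ≥ 2), then it has no colorful (m+n-2)-cycle. Consequently, the spectrum S of prohibited colorful cycle lengths is closed under the operation m ∘ n = m + n - 2. -/
/-- An `n`-cycle in a complete colored graph is an injective map `ZMod n → V`;
it is colorful if the colors of its cyclically consecutive edges are pairwise distinct. -/
def IsColorfulCycle {V Γ : Type*} (col : V → V → Γ) (n : ℕ) : Prop :=
  ∃ v : ZMod n → V, Function.Injective v ∧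
    Function.Injective (fun i : ZMod n => col (v i) (v (i + 1)))

/-- If a complete edge-colored graph has no colorful m-cycle and no colorful n-cycle
(m, n ≥ 2), then it has no colorful (m+n-2)-cycle. -/
theorem no_colorful_add_sub_two {V Γ : Type*} [Fintype V] (col : V → V → Γ)
    (hsymm : ∀ u v, col u v = col v u) (m n : ℕ) (hm : 2 ≤ m) (hn : 2 ≤ n)
    (h1 : ¬ IsColorfulCycle col m) (h2 : ¬ IsColorfulCycle col n) :
    ¬ IsColorfulCycle col (m + n - 2) := by
  by_cases hm2 : m = 2
  · subst hm2
    have e : 2 + n - 2 = n := by omega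
    rwa [e]
  by_cases hn2 : n = 2
  · subst hn2
    have e : m + 2 - 2 = m := by omega
    rwa [e]
  have hm3 : 3 ≤ m := by omega
  have hn3 : 3 ≤ n := by omega
  set N := m + n - 2 with hN
  have hmN : m < N := by omega
  have hnN : n < N := by omega
  haveI : NeZero N := ⟨by omega⟩
  haveI : NeZero m := ⟨by omega⟩
  haveI : NeZero n := ⟨by omega⟩
  rintro ⟨v, hv, hc⟩
  set f : ZMod N → Γ := fun j => col (v j) (v (j + 1)) with hf
  -- injectivity of natCast below N
  have castinj : ∀ a b : ℕ, a < N → b < N → (a : ZMod N) = (b : ZMod N) → a = b := by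
    intro a b ha hb h
    have := congrArg ZMod.val h
    rwa [ZMod.val_cast_of_lt ha, ZMod.val_cast_of_lt hb] at this
  -- the chord color
  set c : Γ := col (v ((m - 1 : ℕ) : ZMod N)) (v 0) with hcdef
  by_cases hcase : ∃ j : ZMod N, j.val < m - 1 ∧ f j = c
  · -- chord color appears in the first arc: build a colorful n-cycle
    obtain ⟨j₀, hj₀, hj₀c⟩ := hcase
    apply h2
    refine ⟨fun i => v ((m - 1 + i.val : ℕ) : ZMod N), ?_, ?_⟩
    · intro i j hij
      have := hv hij
      have h1 : m - 1 + i.val < N + 1 := by have := ZMod.val_lt i; omega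
      have h2 : m - 1 + j.val < N + 1 := by have := ZMod.val_lt j; omega
      -- careful: indices can equal N (≡ 0). Use subtraction trick: add mod is injective
      have : ((i.val : ℕ) : ZMod N) = ((j.val : ℕ) : ZMod N) := by
        have h3 : ((m - 1 + i.val : ℕ) : ZMod N) = ((m - 1 + j.val : ℕ) : ZMod N) := this
        push_cast at h3
        exact add_left_cancel h3
      have := castinj _ _ (lt_trans (ZMod.val_lt i) hnN) (lt_trans (ZMod.val_lt j) hnN) this
      exact ZMod.val_injective n this
    · -- colors
      have key1 : ∀ i : ZMod n, i.val < n - 1 →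
          col (v ((m - 1 + i.val : ℕ) : ZMod N)) (v ((m - 1 + (i + 1).val : ℕ) : ZMod N))
            = f ((m - 1 + i.val : ℕ) : ZMod N) := by
        intro i hi
        have hval : (i + 1).val = i.val + 1 := by
          have : i + 1 = ((i.val + 1 : ℕ) : ZMod n) := by
            conv_lhs => rw [← ZMod.natCast_zmod_val i]
            push_cast; ring
          rw [this, ZMod.val_cast_of_lt (by omega)]
        rw [hval, hf]
        congr 1
        push_cast; ring
      have key2 : ∀ i : ZMod n, i.val = n - 1 →
          col (v ((m - 1 + i.val : ℕ) : ZMod N)) (v ((m - 1 + (i + 1).val : ℕ) : ZMod N))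
            = f j₀ := by
        intro i hi
        have hi1 : i + 1 = 0 := by
          have : i = ((n - 1 : ℕ) : ZMod n) := by
            rw [← ZMod.natCast_zmod_val i, hi]
          rw [this]
          have : ((n - 1 : ℕ) : ZMod n) + 1 = ((n - 1 + 1 : ℕ) : ZMod n) := by push_cast; ring
          rw [this, Nat.sub_add_cancel (by omega), ZMod.natCast_self]
        have hNind : ((m - 1 + i.val : ℕ) : ZMod N) = 0 := by
          rw [hi]
          have : m - 1 + (n - 1) = N := by omega
          rw [this, ZMod.natCast_self]
        rw [hi1, hNind]
        simp only [ZMod.val_zero, Nat.add_zero]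
        rw [hj₀c, hcdef]
        exact hsymm _ _
      intro i j hij
      simp only at hij
      have hiv := ZMod.val_lt i
      have hjv := ZMod.val_lt j
      rcases Nat.lt_or_ge i.val (n - 1) with hi | hi
      · rcases Nat.lt_or_ge j.val (n - 1) with hj | hj
        · rw [key1 i hi, key1 j hj] at hij
          have := hc hij
          have := castinj _ _ (by omega) (by omega) this
          exact ZMod.val_injective n (by omega)
        · have hj' : j.val = n - 1 := by omega
          rw [key1 i hi, key2 j hj'] at hij
          have := hc hij
          exfalso
          have hv1 : ((m - 1 + i.val : ℕ) : ZMod N).val = m - 1 + i.val :=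
            ZMod.val_cast_of_lt (by omega)
          have hv2 := hj₀
          rw [this] at hv1
          omega
      · have hi' : i.val = n - 1 := by omega
        rcases Nat.lt_or_ge j.val (n - 1) with hj | hj
        · rw [key2 i hi', key1 j hj] at hij
          have := hc hij.symm
          exfalso
          have hv1 : ((m - 1 + j.val : ℕ) : ZMod N).val = m - 1 + j.val :=
            ZMod.val_cast_of_lt (by omega)
          rw [this] at hv1
          omega
        · have hj' : j.val = n - 1 := by omega
          exact ZMod.val_injective n (by omega)
  · -- chord color avoids the first arc: build a colorful m-cycle
    push_neg at hcase
    apply h1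
    refine ⟨fun i => v ((i.val : ℕ) : ZMod N), ?_, ?_⟩
    · intro i j hij
      have := hv hij
      have := castinj _ _ (lt_trans (ZMod.val_lt i) hmN) (lt_trans (ZMod.val_lt j) hmN) this
      exact ZMod.val_injective m this
    · have key1 : ∀ i : ZMod m, i.val < m - 1 →
          col (v ((i.val : ℕ) : ZMod N)) (v (((i + 1).val : ℕ) : ZMod N))
            = f ((i.val : ℕ) : ZMod N) := by
        intro i hi
        have hval : (i + 1).val = i.val + 1 := by
          have : i + 1 = ((i.val + 1 : ℕ) : ZMod m) := by
            conv_lhs => rw [← ZMod.natCast_zmod_val i]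
            push_cast; ring
          rw [this, ZMod.val_cast_of_lt (by omega)]
        rw [hval, hf]
        congr 1
        push_cast; ring
      have key2 : ∀ i : ZMod m, i.val = m - 1 →
          col (v ((i.val : ℕ) : ZMod N)) (v (((i + 1).val : ℕ) : ZMod N)) = c := by
        intro i hi
        have hi1 : i + 1 = 0 := by
          have : i = ((m - 1 : ℕ) : ZMod m) := by
            rw [← ZMod.natCast_zmod_val i, hi]
          rw [this]
          have : ((m - 1 : ℕ) : ZMod m) + 1 = ((m - 1 + 1 : ℕ) : ZMod m) := by push_cast; ring
          rw [this, Nat.sub_add_cancel (by omega), ZMod.natCast_self]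
        rw [hi1, hi, hcdef]
        simp
      intro i j hij
      simp only at hij
      have hiv := ZMod.val_lt i
      have hjv := ZMod.val_lt j
      rcases Nat.lt_or_ge i.val (m - 1) with hi | hi
      · rcases Nat.lt_or_ge j.val (m - 1) with hj | hj
        · rw [key1 i hi, key1 j hj] at hij
          have := hc hij
          have := castinj _ _ (by omega) (by omega) this
          exact ZMod.val_injective m (by omega)
        · have hj' : j.val = m - 1 := by omega
          rw [key1 i hi, key2 j hj'] at hij
          exact absurd hij (hcase _ (by rw [ZMod.val_cast_of_lt (by omega)]; omega))
      · have hi' : i.val = m - 1 := by omega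
        rcases Nat.lt_or_ge j.val (m - 1) with hj | hj
        · have hj'' := hcase ((j.val : ℕ) : ZMod N) (by rw [ZMod.val_cast_of_lt (by omega)]; omega)
          rw [key2 i hi', key1 j hj] at hij
          exact absurd hij.symm hj''
        · have hj' : j.val = m - 1 := by omega
          exact ZMod.val_injective m (by omega)
end

section
/- If a complete edge-colored graph contains no colorful triangle, then it contains no colorful cycle of any length n ≥ 2. -/
/-- If a complete edge-colored graph contains no colorful triangle, then it contains
no colorful cycle of any length n ≥ 2. -/
theorem no_colorful_triangle_no_colorful_cycle {V Γ : Type*} [Fintype V] (col : V → V → Γ)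
    (hsymm : ∀ u v, col u v = col v u)
    (h3 : ¬ IsColorfulCycle col 3) :
    ∀ n : ℕ, 2 ≤ n → ¬ IsColorfulCycle col n := by
  intro n
  induction n using Nat.strong_induction_on with
  | _ n ih =>
    intro hn hcyc
    obtain ⟨v, hv, hc⟩ := hcyc
    rcases Nat.lt_or_ge n 4 with h4 | h4
    · interval_cases n
      · -- n = 2
        have h01 : (fun i : ZMod 2 => col (v i) (v (i + 1))) 0
            = (fun i : ZMod 2 => col (v i) (v (i + 1))) 1 := by
          show col (v 0) (v (0 + 1)) = col (v 1) (v (1 + 1))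
          have e1 : ((0 : ZMod 2) + 1) = 1 := by decide
          have e2 : ((1 : ZMod 2) + 1) = 0 := by decide
          rw [e1, e2]
          exact hsymm _ _
        exact absurd (hc h01) (by decide)
      · exact h3 ⟨v, hv, hc⟩
    · -- n ≥ 4
      haveI : NeZero n := ⟨by omega⟩
      haveI : Fact (1 < n) := ⟨by omega⟩
      set c : ZMod n → Γ := fun i => col (v i) (v (i + 1)) with hcdef
      have hcinj : Function.Injective c := hc
      have hval : ∀ k : ℕ, k < n → ((k : ZMod n)).val = k := fun k hk => ZMod.val_cast_of_lt hk
      have hcast_inj : ∀ a b : ℕ, a < n → b < n → (a : ZMod n) = (b : ZMod n) → a = b := by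
        intro a b ha hb hab
        have := congrArg ZMod.val hab
        rwa [hval a ha, hval b hb] at this
      have hc0 : c 0 = col (v 0) (v 1) := by rw [hcdef]; norm_num
      have hc1 : c 1 = col (v 1) (v 2) := by
        rw [hcdef]
        norm_num [one_add_one_eq_two]
      -- the triangle v0 v1 v2 is not colorful, so col (v 2) (v 0) = c 0 ∨ c 1
      have htri : col (v 2) (v 0) = c 0 ∨ col (v 2) (v 0) = c 1 := by
        by_contra hne
        push_neg at hne
        obtain ⟨hne0, hne1⟩ := hne
        apply h3
        set t : ZMod 3 → V := fun i => v ((i.val : ℕ) : ZMod n) with ht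
        have t0 : t 0 = v 0 := by
          have : ((0 : ZMod 3)).val = 0 := by decide
          rw [ht]; simp [this]
        have t1 : t 1 = v 1 := by
          have : ((1 : ZMod 3)).val = 1 := by decide
          rw [ht]; simp [this]
        have t2 : t 2 = v 2 := by
          have : ((2 : ZMod 3)).val = 2 := by decide
          rw [ht]; simp [this]
        refine ⟨t, ?_, ?_⟩
        · intro i j hij
          have hvij : ((i.val : ℕ) : ZMod n) = ((j.val : ℕ) : ZMod n) := hv hij
          have hij' : i.val = j.val :=
            hcast_inj i.val j.val (by have := i.val_lt; omega) (by have := j.val_lt; omega) hvij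
          exact ZMod.val_injective 3 hij'
        · intro i j hij
          simp only at hij
          have e01 : ((0 : ZMod 3) + 1) = 1 := by decide
          have e12 : ((1 : ZMod 3) + 1) = 2 := by decide
          have e20 : ((2 : ZMod 3) + 1) = 0 := by decide
          have hcases : ∀ k : ZMod 3, k = 0 ∨ k = 1 ∨ k = 2 := by decide
          have hc01 : c 0 ≠ c 1 := by
            intro h
            have := hcinj h
            exact absurd (hcast_inj 0 1 (by omega) (by omega) (by exact_mod_cast this)) (by omega)
          rcases hcases i with rfl | rfl | rfl <;> rcases hcases j with rfl | rfl | rfl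
          · rfl
          · rw [e01, e12, t0, t1, t2, ← hc0, ← hc1] at hij
            exact absurd hij hc01
          · rw [e01, e20, t0, t1, t2, ← hc0] at hij
            exact absurd hij.symm hne0
          · rw [e01, e12, t0, t1, t2, ← hc0, ← hc1] at hij
            exact absurd hij.symm hc01
          · rfl
          · rw [e12, e20, t0, t1, t2, ← hc1] at hij
            exact absurd hij.symm hne1
          · rw [e01, e20, t0, t1, t2, ← hc0] at hij
            exact absurd hij hne0
          · rw [e12, e20, t0, t1, t2, ← hc1] at hij
            exact absurd hij hne1
          · rfl
      -- build a colorful (n-1)-cycle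
      set m := n - 1 with hmdef
      haveI : NeZero m := ⟨by omega⟩
      haveI : Fact (1 < m) := ⟨by omega⟩
      set g : ZMod m → ZMod n := fun i => if i = 0 then 0 else ((i.val + 1 : ℕ) : ZMod n)
        with hg
      have hg0 : g 0 = 0 := if_pos rfl
      have hgval : ∀ i : ZMod m, i ≠ 0 → (g i).val = i.val + 1 := by
        intro i hi
        rw [hg]
        simp only [if_neg hi]
        exact hval _ (by have := i.val_lt; omega)
      have hginj : Function.Injective g := by
        intro i j hij
        by_cases hi : i = 0 <;> by_cases hj : j = 0
        · rw [hi, hj]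
        · exfalso
          have := congrArg ZMod.val hij
          rw [hi, hg0, ZMod.val_zero, hgval j hj] at this
          omega
        · exfalso
          have := congrArg ZMod.val hij
          rw [hj, hg0, ZMod.val_zero, hgval i hi] at this
          omega
        · have hvv := congrArg ZMod.val hij
          rw [hgval i hi, hgval j hj] at hvv
          exact ZMod.val_injective m (by omega : i.val = j.val)
      have hgsucc : ∀ i : ZMod m, i ≠ 0 → g (i + 1) = g i + 1 := by
        intro i hi
        by_cases h : i.val + 1 < m
        · have hv1 : (i + 1).val = i.val + 1 := by
            rw [ZMod.val_add_of_lt (by rw [ZMod.val_one]; omega), ZMod.val_one]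
          have hne : i + 1 ≠ 0 := by
            intro h0
            rw [h0, ZMod.val_zero] at hv1
            omega
          rw [hg]
          simp only [if_neg hne, if_neg hi, hv1]
          push_cast
          ring
        · have hvm : i.val = m - 1 := by have := i.val_lt; omega
          have h0 : i + 1 = 0 := by
            calc i + 1 = ((i.val : ℕ) : ZMod m) + 1 := by rw [ZMod.natCast_zmod_val]
            _ = ((i.val + 1 : ℕ) : ZMod m) := by push_cast; ring
            _ = 0 := by rw [show i.val + 1 = m from by omega]; exact ZMod.natCast_self m
          rw [h0, hg0, hg]
          simp only [if_neg hi]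
          have : ((i.val + 1 : ℕ) : ZMod n) + 1 = ((i.val + 2 : ℕ) : ZMod n) := by
            push_cast; ring
          rw [this, show i.val + 2 = n from by omega, ZMod.natCast_self]
      have hg1 : g 1 = 2 := by
        rw [hg]
        simp only [if_neg (one_ne_zero : (1 : ZMod m) ≠ 0), ZMod.val_one]
        norm_num
      have key : ∀ i : ZMod m, i ≠ 0 → col (v (g i)) (v (g (i + 1))) = c (g i) := by
        intro i hi
        rw [hgsucc i hi]
      have key0 : col (v (g 0)) (v (g (0 + 1))) = col (v 2) (v 0) := by
        rw [hg0, zero_add, hg1]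
        exact hsymm _ _
      -- a color c (g j) with j ≠ 0 can't be c 0 or c 1
      have hbig : ∀ j : ZMod m, j ≠ 0 → c (g j) ≠ c 0 ∧ c (g j) ≠ c 1 := by
        intro j hj
        have hjv : j.val ≠ 0 := fun h' => hj ((ZMod.val_eq_zero j).mp h')
        constructor <;> intro h <;> have := congrArg ZMod.val (hcinj h)
        · rw [hgval j hj, ZMod.val_zero] at this; omega
        · rw [hgval j hj, ZMod.val_one] at this; omega
      refine ih m (by omega) (by omega) ⟨fun i => v (g i), fun i j hij => hginj (hv hij), ?_⟩
      intro i j hij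
      simp only at hij
      by_cases hi : i = 0 <;> by_cases hj : j = 0
      · rw [hi, hj]
      · exfalso
        rw [hi, key0, key j hj] at hij
        rcases htri with h | h
        · exact (hbig j hj).1 (hij.symm.trans h)
        · exact (hbig j hj).2 (hij.symm.trans h)
      · exfalso
        rw [hj, key0, key i hi] at hij
        rcases htri with h | h
        · exact (hbig i hi).1 (hij.trans h)
        · exact (hbig i hi).2 (hij.trans h)
      · rw [key i hi, key j hj] at hij
        exact hginj (hcinj hij)
end

section
/- If the spectrum S of a complete edge-colored graph contains 4, then there exists an odd integer m ≥ 3 such that S = {2, 4, 6, …, m−1} ∪ {m, m+1, m+2, …}, i.e., S consists of all even integers less than m together with all integers at least m. -/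
lemma cast_inj_aux {m : ℕ} [NeZero m] {a b : ℕ} (ha : a < m) (hb : b < m)
    (h : (a : ZMod m) = (b : ZMod m)) : a = b := by
  have := congrArg ZMod.val h
  rwa [ZMod.val_cast_of_lt ha, ZMod.val_cast_of_lt hb] at this

lemma aux_not_two {V Γ : Type*} (col : V → V → Γ)
    (hsymm : ∀ u v, col u v = col v u) : ¬ IsColorfulCycle col 2 := by
  rintro ⟨v, -, he⟩
  have h : (fun i : ZMod 2 => col (v i) (v (i + 1))) 0
      = (fun i : ZMod 2 => col (v i) (v (i + 1))) 1 := by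
    simp only
    rw [show ((1 : ZMod 2) + 1) = 0 by decide, show ((0 : ZMod 2) + 1) = 1 by decide]
    exact hsymm _ _
  exact absurd (he h) (by decide)

lemma aux_big {V Γ : Type*} [Fintype V] (col : V → V → Γ) {n : ℕ}
    (hn : 0 < n) (hcard : Fintype.card V < n) : ¬ IsColorfulCycle col n := by
  rintro ⟨v, hv, -⟩
  haveI : NeZero n := ⟨by omega⟩
  have := Fintype.card_le_of_injective v hv
  rw [ZMod.card] at this
  omega

lemma aux_step {V Γ : Type*} (col : V → V → Γ) (hsymm : ∀ u v, col u v = col v u)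
    (h4 : ¬ IsColorfulCycle col 4) {n : ℕ} (hn : 2 ≤ n)
    (h : ¬ IsColorfulCycle col n) : ¬ IsColorfulCycle col (n + 2) := by
  rcases eq_or_lt_of_le hn with rfl | hn3
  · exact h4
  rintro ⟨v, hv, he⟩
  haveI : NeZero n := ⟨by omega⟩
  haveI : NeZero (n + 2) := ⟨by omega⟩
  have he' : ∀ a b : ZMod (n + 2),
      col (v a) (v (a + 1)) = col (v b) (v (b + 1)) → a = b := fun a b hab => he hab
  have hsucc : ∀ a : ℕ, ((a : ZMod (n + 2)) + 1) = ((a + 1 : ℕ) : ZMod (n + 2)) := by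
    intro a; push_cast; ring
  -- colors of the original cycle, indexed by naturals; they are pairwise distinct
  have cne : ∀ a b : ℕ, a < n + 2 → b < n + 2 → a ≠ b →
      col (v ((a : ℕ) : ZMod (n + 2))) (v ((a + 1 : ℕ) : ZMod (n + 2)))
        ≠ col (v ((b : ℕ) : ZMod (n + 2))) (v ((b + 1 : ℕ) : ZMod (n + 2))) := by
    intro a b ha hb hab hcon
    apply hab
    refine cast_inj_aux ha hb (he' _ _ ?_)
    rwa [hsucc a, hsucc b]
  by_cases hcase : ∃ k : ℕ, k < 3 ∧
      col (v ((0 : ℕ) : ZMod (n + 2))) (v ((3 : ℕ) : ZMod (n + 2)))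
        = col (v ((k : ℕ) : ZMod (n + 2))) (v ((k + 1 : ℕ) : ZMod (n + 2)))
  · -- the chord clashes with the short side: build a colorful n-cycle
    obtain ⟨k, hk3, hkc⟩ := hcase
    apply h
    set w : ZMod n → V := fun i =>
      if i = 0 then v ((0 : ℕ) : ZMod (n + 2)) else v ((i.val + 2 : ℕ) : ZMod (n + 2)) with hw
    have hvlt : ∀ i : ZMod n, i.val < n := fun i => ZMod.val_lt i
    have hvpos : ∀ i : ZMod n, i ≠ 0 → 1 ≤ i.val := by
      intro i hi
      rcases Nat.eq_zero_or_pos i.val with h0 | h0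
      · exact absurd ((ZMod.val_eq_zero i).mp h0) hi
      · exact h0
    have hwz : w 0 = v ((0 : ℕ) : ZMod (n + 2)) := by rw [hw]; simp only [if_pos]
    have hwnz : ∀ i : ZMod n, i ≠ 0 → w i = v ((i.val + 2 : ℕ) : ZMod (n + 2)) := by
      intro i hi; rw [hw]; simp only [if_neg hi]
    have hone : (1 : ZMod n) ≠ 0 := by
      intro hcon
      have h1 : ((1 : ℕ) : ZMod n) = ((0 : ℕ) : ZMod n) := by push_cast; exact hcon
      have := cast_inj_aux (by omega) (by omega) h1
      omega
    have honeval : (1 : ZMod n).val = 1 := by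
      have h1 : ((1 : ℕ) : ZMod n).val = 1 := ZMod.val_cast_of_lt (by omega)
      simpa using h1
    have hw1 : w 1 = v ((3 : ℕ) : ZMod (n + 2)) := by
      rw [hwnz 1 hone, honeval]
    have hwsucc : ∀ i : ZMod n, i ≠ 0 → w (i + 1) = v ((i.val + 3 : ℕ) : ZMod (n + 2)) := by
      intro i hi
      have hiv : i.val < n := hvlt i
      by_cases hlast : i.val + 1 = n
      · have hi1 : i + 1 = 0 := by
          have hrep : i = ((i.val : ℕ) : ZMod n) := (ZMod.natCast_rightInverse i).symm
          rw [hrep, ← Nat.cast_one, ← Nat.cast_add, hlast, ZMod.natCast_self]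
        have hv3 : ((i.val + 3 : ℕ) : ZMod (n + 2)) = ((0 : ℕ) : ZMod (n + 2)) := by
          have e : i.val + 3 = n + 2 := by omega
          rw [e, ZMod.natCast_self, Nat.cast_zero]
        rw [hi1, hwz, hv3]
      · have hrep : (i + 1 : ZMod n) = ((i.val + 1 : ℕ) : ZMod n) := by
          have h0 : i = ((i.val : ℕ) : ZMod n) := (ZMod.natCast_rightInverse i).symm
          conv_lhs => rw [h0]
          push_cast; ring
        have hne : (i + 1 : ZMod n) ≠ 0 := by
          rw [hrep]
          intro hcon
          have h1 : ((i.val + 1 : ℕ) : ZMod n) = ((0 : ℕ) : ZMod n) := by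
            rw [hcon]; simp
          have := cast_inj_aux (by omega) (by omega) h1
          omega
        have hval1 : (i + 1 : ZMod n).val = i.val + 1 := by
          rw [hrep, ZMod.val_cast_of_lt (by omega)]
        rw [hwnz _ hne, hval1]
    have hedge : ∀ i : ZMod n, i ≠ 0 → col (w i) (w (i + 1)) =
        col (v ((i.val + 2 : ℕ) : ZMod (n + 2))) (v ((i.val + 3 : ℕ) : ZMod (n + 2))) := by
      intro i hi
      rw [hwnz i hi, hwsucc i hi]
    refine ⟨w, ?_, ?_⟩
    · -- injectivity of the vertices
      intro i j hij
      by_cases hi : i = 0 <;> by_cases hj : j = 0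
      · rw [hi, hj]
      · exfalso
        rw [hi, hwz, hwnz j hj] at hij
        have := cast_inj_aux (m := n + 2) (by omega) (by have := hvlt j; omega) (hv hij)
        omega
      · exfalso
        rw [hj, hwz, hwnz i hi] at hij
        have := cast_inj_aux (m := n + 2) (by have := hvlt i; omega) (by omega) (hv hij)
        omega
      · rw [hwnz i hi, hwnz j hj] at hij
        have := cast_inj_aux (m := n + 2) (by have := hvlt i; omega)
          (by have := hvlt j; omega) (hv hij)
        exact ZMod.val_injective n (by omega)
    · -- injectivity of the edge colors
      intro i j hij
      replace hij : col (w i) (w (i + 1)) = col (w j) (w (j + 1)) := hij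
      by_cases hi : i = 0 <;> by_cases hj : j = 0
      · rw [hi, hj]
      · exfalso
        rw [hi, zero_add, hwz, hw1, hedge j hj] at hij
        have hPP : col (v ((k : ℕ) : ZMod (n + 2))) (v ((k + 1 : ℕ) : ZMod (n + 2)))
            = col (v ((j.val + 2 : ℕ) : ZMod (n + 2)))
                (v ((j.val + 2 + 1 : ℕ) : ZMod (n + 2))) := by
          have e : j.val + 2 + 1 = j.val + 3 := by omega
          rw [e]; exact hkc.symm.trans hij
        exact cne k (j.val + 2) (by omega) (by have := hvlt j; omega)
          (by have := hvpos j hj; omega) hPP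
      · exfalso
        rw [hj, zero_add, hwz, hw1, hedge i hi] at hij
        have hPP : col (v ((k : ℕ) : ZMod (n + 2))) (v ((k + 1 : ℕ) : ZMod (n + 2)))
            = col (v ((i.val + 2 : ℕ) : ZMod (n + 2)))
                (v ((i.val + 2 + 1 : ℕ) : ZMod (n + 2))) := by
          have e : i.val + 2 + 1 = i.val + 3 := by omega
          rw [e]; exact hkc.symm.trans hij.symm
        exact cne k (i.val + 2) (by omega) (by have := hvlt i; omega)
          (by have := hvpos i hi; omega) hPP
      · rw [hedge i hi, hedge j hj] at hij
        by_cases heq : i.val = j.val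
        · exact ZMod.val_injective n heq
        · exfalso
          have e1 : i.val + 3 = (i.val + 2) + 1 := by omega
          have e2 : j.val + 3 = (j.val + 2) + 1 := by omega
          rw [e1, e2] at hij
          exact cne (i.val + 2) (j.val + 2) (by have := hvlt i; omega)
            (by have := hvlt j; omega) (by omega) hij
  · -- the chord misses the short side: build a colorful 4-cycle
    push_neg at hcase
    apply h4
    refine ⟨fun i : ZMod 4 => v ((i.val : ℕ) : ZMod (n + 2)), ?_, ?_⟩
    · intro i j hij
      replace hij : v ((i.val : ℕ) : ZMod (n + 2)) = v ((j.val : ℕ) : ZMod (n + 2)) := hij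
      have := cast_inj_aux (m := n + 2) (by have := ZMod.val_lt i; omega)
        (by have := ZMod.val_lt j; omega) (hv hij)
      exact ZMod.val_injective 4 this
    · have V0 : ((0 : ZMod 4)).val = 0 := by decide
      have V1 : ((1 : ZMod 4)).val = 1 := by decide
      have V2 : ((2 : ZMod 4)).val = 2 := by decide
      have V3 : ((3 : ZMod 4)).val = 3 := by decide
      have S0 : ((0 : ZMod 4) + 1).val = 1 := by decide
      have S1 : ((1 : ZMod 4) + 1).val = 2 := by decide
      have S2 : ((2 : ZMod 4) + 1).val = 3 := by decide
      have S3 : ((3 : ZMod 4) + 1).val = 0 := by decide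
      have hvals : ∀ x : ZMod 4, x = 0 ∨ x = 1 ∨ x = 2 ∨ x = 3 := by decide
      have h01 : col (v ((0 : ℕ) : ZMod (n + 2))) (v ((1 : ℕ) : ZMod (n + 2)))
          ≠ col (v ((1 : ℕ) : ZMod (n + 2))) (v ((2 : ℕ) : ZMod (n + 2))) :=
        cne 0 1 (by omega) (by omega) (by omega)
      have h02 : col (v ((0 : ℕ) : ZMod (n + 2))) (v ((1 : ℕ) : ZMod (n + 2)))
          ≠ col (v ((2 : ℕ) : ZMod (n + 2))) (v ((3 : ℕ) : ZMod (n + 2))) :=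
        cne 0 2 (by omega) (by omega) (by omega)
      have h12 : col (v ((1 : ℕ) : ZMod (n + 2))) (v ((2 : ℕ) : ZMod (n + 2)))
          ≠ col (v ((2 : ℕ) : ZMod (n + 2))) (v ((3 : ℕ) : ZMod (n + 2))) :=
        cne 1 2 (by omega) (by omega) (by omega)
      have hchord : ∀ a : ℕ, a < 3 →
          col (v ((a : ℕ) : ZMod (n + 2))) (v ((a + 1 : ℕ) : ZMod (n + 2)))
            ≠ col (v ((3 : ℕ) : ZMod (n + 2))) (v ((0 : ℕ) : ZMod (n + 2))) := by
        intro a ha hcon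
        have hs : col (v ((0 : ℕ) : ZMod (n + 2))) (v ((3 : ℕ) : ZMod (n + 2)))
            = col (v ((3 : ℕ) : ZMod (n + 2))) (v ((0 : ℕ) : ZMod (n + 2))) := hsymm _ _
        exact hcase a ha (hs.trans hcon.symm)
      have h03 : col (v ((0 : ℕ) : ZMod (n + 2))) (v ((1 : ℕ) : ZMod (n + 2)))
          ≠ col (v ((3 : ℕ) : ZMod (n + 2))) (v ((0 : ℕ) : ZMod (n + 2))) := hchord 0 (by omega)
      have h13 : col (v ((1 : ℕ) : ZMod (n + 2))) (v ((2 : ℕ) : ZMod (n + 2)))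
          ≠ col (v ((3 : ℕ) : ZMod (n + 2))) (v ((0 : ℕ) : ZMod (n + 2))) := hchord 1 (by omega)
      have h23 : col (v ((2 : ℕ) : ZMod (n + 2))) (v ((3 : ℕ) : ZMod (n + 2)))
          ≠ col (v ((3 : ℕ) : ZMod (n + 2))) (v ((0 : ℕ) : ZMod (n + 2))) := hchord 2 (by omega)
      intro i j hij
      replace hij : col (v ((i.val : ℕ) : ZMod (n + 2))) (v (((i + 1 : ZMod 4).val : ℕ) : ZMod (n + 2)))
          = col (v ((j.val : ℕ) : ZMod (n + 2))) (v (((j + 1 : ZMod 4).val : ℕ) : ZMod (n + 2))) := hij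
      rcases hvals i with rfl | rfl | rfl | rfl <;> rcases hvals j with rfl | rfl | rfl | rfl <;>
        simp only [V0, V1, V2, V3, S0, S1, S2, S3] at hij <;>
        first
          | rfl
          | exact absurd hij h01 | exact absurd hij.symm h01
          | exact absurd hij h02 | exact absurd hij.symm h02
          | exact absurd hij h12 | exact absurd hij.symm h12
          | exact absurd hij h03 | exact absurd hij.symm h03
          | exact absurd hij h13 | exact absurd hij.symm h13
          | exact absurd hij h23 | exact absurd hij.symm h23

/-- If the spectrum of a complete colored graph contains 4, then there is an odd m ≥ 3
such that the spectrum consists of all even integers in [2, m) together with all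
integers ≥ m. -/
theorem spectrum_with_four {V Γ : Type*} [Fintype V] (col : V → V → Γ)
    (hsymm : ∀ u v, col u v = col v u)
    (S : Set ℕ) (hS : S = {n | 2 ≤ n ∧ ¬ IsColorfulCycle col n})
    (h4 : 4 ∈ S) :
    ∃ m, Odd m ∧ 3 ≤ m ∧ S = {n | (2 ≤ n ∧ Even n ∧ n < m) ∨ m ≤ n} := by
  classical
  have h2S : 2 ∈ S := by rw [hS]; exact ⟨le_refl 2, aux_not_two col hsymm⟩
  have h4' : ¬ IsColorfulCycle col 4 := by rw [hS] at h4; exact h4.2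
  have hstep : ∀ n, n ∈ S → n + 2 ∈ S := by
    intro n hn
    rw [hS] at hn ⊢
    exact ⟨by omega, aux_step col hsymm h4' hn.1 hn.2⟩
  have hup : ∀ a, a ∈ S → ∀ k : ℕ, a + 2 * k ∈ S := by
    intro a ha k
    induction k with
    | zero => simpa using ha
    | succ k ih =>
        have := hstep _ ih
        have heq : a + 2 * (k + 1) = a + 2 * k + 2 := by ring
        rwa [heq]
  have heven : ∀ k : ℕ, 2 + 2 * k ∈ S := fun k => hup 2 h2S k
  have hPex : ∃ m, Odd m ∧ 3 ≤ m ∧ m ∈ S := by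
    refine ⟨2 * Fintype.card V + 3, ⟨Fintype.card V + 1, by ring⟩, by omega, ?_⟩
    rw [hS]
    exact ⟨by omega, aux_big col (by omega) (by omega)⟩
  obtain ⟨hodd, hm3, hmS⟩ := Nat.find_spec hPex
  refine ⟨Nat.find hPex, hodd, hm3, ?_⟩
  set m := Nat.find hPex with hm
  ext n
  simp only [Set.mem_setOf_eq]
  constructor
  · intro hnS
    have hn2 : 2 ≤ n := by rw [hS] at hnS; exact hnS.1
    by_cases hev : Even n
    · by_cases hlt : n < m
      · exact Or.inl ⟨hn2, hev, hlt⟩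
      · exact Or.inr (by omega)
    · right
      have hodd' : Odd n := Nat.not_even_iff_odd.mp hev
      have hn3 : 3 ≤ n := by obtain ⟨r, hr⟩ := hodd'; omega
      exact Nat.find_le ⟨hodd', hn3, hnS⟩
  · rintro (⟨hn2, hev, -⟩ | hge)
    · obtain ⟨r, hr⟩ := hev
      have hk : n = 2 + 2 * (r - 1) := by omega
      rw [hk]; exact heven _
    · by_cases hev : Even n
      · obtain ⟨r, hr⟩ := hev
        have hk : n = 2 + 2 * (r - 1) := by omega
        rw [hk]; exact heven _
      · have hodd' : Odd n := Nat.not_even_iff_odd.mp hev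
        obtain ⟨r, hr⟩ := hodd'
        obtain ⟨s, hs⟩ := hodd
        have hk : n = m + 2 * (r - s) := by omega
        rw [hk]; exact hup m hmS _
end

section
/- For every odd integer m = 2k+1 > 1, the complete graph on vertices v_{-k},…,v_k with the coloring: edge v_i v_j gets color α if i and j have the same parity, and gets color β_i if i and j have different parity and |i| > |j| (where α and all β_i, i ≠ 0, are pairwise distinct colors), contains a colorful m-cycle but contains no colorful 4-cycle. -/
namespace ColorfulAux

/-- the absolute value placed at position `p` of the cycle -/
def w (k p : ℕ) : ℕ := min p (2 * k + 1 - p)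

/-- the vertex at position `p` of the cycle -/
def g (k p : ℕ) : ℤ := (if p % 2 = 0 then -1 else 1) * (w k p : ℤ)

lemma g_abs (k p : ℕ) : |g k p| = (w k p : ℤ) := by
  unfold g
  split <;> simp [abs_of_nonneg]

lemma g_mod (k p : ℕ) : g k p % 2 = (w k p : ℤ) % 2 := by
  unfold g
  split <;> omega

lemma w_le (k p : ℕ) : w k p ≤ k := by
  unfold w; omega

lemma g_inj (k : ℕ) {p q : ℕ} (hp : p ≤ 2 * k) (hq : q ≤ 2 * k)
    (h : g k p = g k q) : p = q := by
  have habs : w k p = w k q := by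
    have := congrArg abs h
    rw [g_abs, g_abs] at this
    exact_mod_cast this
  have hd : p = q ∨ p + q = 2 * k + 1 := by
    unfold w at habs; omega
  rcases hd with rfl | hpq
  · rfl
  exfalso
  have h1 : 1 ≤ w k p := by unfold w; omega
  have hpar : p % 2 ≠ q % 2 := by omega
  rw [g, g, ← habs] at h
  split at h <;> split at h <;> omega

lemma col_step (k : ℕ) (hk : 1 ≤ k) (p : ℕ) (hp : p ≤ 2 * k) :
    (if g k p % 2 = g k ((p + 1) % (2 * k + 1)) % 2 then (none : Option ℤ)
      else some (if |g k ((p + 1) % (2 * k + 1))| < |g k p| then g k p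
        else g k ((p + 1) % (2 * k + 1))))
    = if p = k then none else some (g k (if p < k then p + 1 else p)) := by
  rcases lt_trichotomy p k with h | h | h
  · have hq : (p + 1) % (2 * k + 1) = p + 1 := Nat.mod_eq_of_lt (by omega)
    have hpar : ¬ (g k p % 2 = g k (p + 1) % 2) := by
      rw [g_mod, g_mod]
      have : w k p % 2 ≠ w k (p + 1) % 2 := by unfold w; omega
      intro hcon; apply this; omega
    have habs : ¬ (|g k (p + 1)| < |g k p|) := by
      rw [g_abs, g_abs]
      have : w k p < w k (p + 1) := by unfold w; omega
      omega
    rw [hq, if_neg hpar, if_neg habs, if_neg (show ¬ p = k by omega), if_pos h]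
  · have hq : (p + 1) % (2 * k + 1) = p + 1 := Nat.mod_eq_of_lt (by omega)
    have hpar : g k p % 2 = g k (p + 1) % 2 := by
      rw [g_mod, g_mod]
      have : w k p = w k (p + 1) := by unfold w; omega
      rw [this]
    rw [hq, if_pos hpar, if_pos h]
  · rcases Nat.lt_or_ge p (2 * k) with h2 | h2
    · have hq : (p + 1) % (2 * k + 1) = p + 1 := Nat.mod_eq_of_lt (by omega)
      have hpar : ¬ (g k p % 2 = g k (p + 1) % 2) := by
        rw [g_mod, g_mod]
        have : w k p % 2 ≠ w k (p + 1) % 2 := by unfold w; omega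
        intro hcon; apply this; omega
      have habs : |g k (p + 1)| < |g k p| := by
        rw [g_abs, g_abs]
        have : w k (p + 1) < w k p := by unfold w; omega
        omega
      rw [hq, if_neg hpar, if_pos habs, if_neg (show ¬ p = k by omega),
        if_neg (show ¬ p < k by omega)]
    · have hp2 : p = 2 * k := by omega
      have hq : (p + 1) % (2 * k + 1) = 0 := by rw [hp2]; exact Nat.mod_self _
      have hpar : ¬ (g k p % 2 = g k 0 % 2) := by
        rw [g_mod, g_mod]
        have h1 : w k p = 1 := by unfold w; omega
        have h0 : w k 0 = 0 := by unfold w; omega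
        rw [h1, h0]; norm_num
      have habs : |g k 0| < |g k p| := by
        rw [g_abs, g_abs]
        have h1 : w k p = 1 := by unfold w; omega
        have h0 : w k 0 = 0 := by unfold w; omega
        rw [h1, h0]; norm_num
      rw [hq, if_neg hpar, if_pos habs, if_neg (show ¬ p = k by omega),
        if_neg (show ¬ p < k by omega)]

end ColorfulAux

open ColorfulAux in
/-- For every odd m = 2k+1 > 1, the complete graph on vertices indexed by integers
i with |i| ≤ k, colored by: α (encoded as `none`) if i, j have the same parity, and
β_i (encoded as `some i`) if i, j have different parity and |i| > |j|, has a colorful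
m-cycle but no colorful 4-cycle. -/
theorem colorful_odd_no_square (k : ℕ) (hk : 1 ≤ k)
    (col : {i : ℤ // |i| ≤ (k : ℤ)} → {i : ℤ // |i| ≤ (k : ℤ)} → Option ℤ)
    (hcol : ∀ i j, col i j =
      if i.1 % 2 = j.1 % 2 then none
      else some (if |j.1| < |i.1| then i.1 else j.1)) :
    IsColorfulCycle col (2 * k + 1) ∧ ¬ IsColorfulCycle col 4 := by
  constructor
  · -- the colorful (2k+1)-cycle
    haveI : NeZero (2 * k + 1) := ⟨by omega⟩
    have hval : ∀ i : ZMod (2 * k + 1), i.val ≤ 2 * k := by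
      intro i
      have := ZMod.val_lt i
      omega
    have hbound : ∀ p : ℕ, |g k p| ≤ (k : ℤ) := by
      intro p
      rw [g_abs]
      exact_mod_cast w_le k p
    set vv : ZMod (2 * k + 1) → {i : ℤ // |i| ≤ (k : ℤ)} :=
      fun i => ⟨g k i.val, hbound i.val⟩ with hvv
    have keyc : ∀ i : ZMod (2 * k + 1), col (vv i) (vv (i + 1)) =
        if i.val = k then none
        else some (g k (if i.val < k then i.val + 1 else i.val)) := by
      intro i
      have hq : (i + 1).val = (i.val + 1) % (2 * k + 1) := by
        rw [ZMod.val_add, ZMod.val_one_eq_one_mod]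
        conv_rhs => rw [Nat.add_mod, Nat.mod_eq_of_lt (ZMod.val_lt i)]
      rw [hcol]
      simp only [hvv, hq]
      exact col_step k hk i.val (hval i)
    refine ⟨vv, ?_, ?_⟩
    · intro i j hij
      have h1 : g k i.val = g k j.val := congrArg Subtype.val hij
      exact ZMod.val_injective _ (g_inj k (hval i) (hval j) h1)
    · intro i j hij
      simp only [keyc] at hij
      have hi := hval i
      have hj := hval j
      by_cases h1 : i.val = k <;> by_cases h2 : j.val = k
      · exact ZMod.val_injective _ (h1.trans h2.symm)
      · rw [if_pos h1, if_neg h2] at hij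
        exact absurd hij (by simp)
      · rw [if_neg h1, if_pos h2] at hij
        exact absurd hij (by simp)
      · rw [if_neg h1, if_neg h2] at hij
        have hij' := Option.some.inj hij
        have hσi : (if i.val < k then i.val + 1 else i.val) ≤ 2 * k := by
          split <;> omega
        have hσj : (if j.val < k then j.val + 1 else j.val) ≤ 2 * k := by
          split <;> omega
        have := g_inj k hσi hσj hij'
        apply ZMod.val_injective
        split_ifs at this <;> omega
  · -- no colorful 4-cycle
    rintro ⟨v, hv, hc⟩
    have key2 : ∀ j : ZMod 4, j + 1 ≠ j := by decide
    have key3 : ∀ j : ZMod 4, j + 2 ≠ j := by decide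
    have key4 : ∀ j : ZMod 4, j + 3 ≠ j := by decide
    have key5 : ∀ j : ZMod 4, j + 3 + 1 = j := by decide
    have key6 : ∀ j : ZMod 4, j + 2 + 1 = j + 3 := by decide
    have key7 : ∀ j : ZMod 4, j + 1 + 1 = j + 2 := by decide
    have key8 : ∀ j : ZMod 4, j - 1 + 1 = j := by decide
    have key9 : ∀ j : ZMod 4, j - 1 ≠ j := by decide
    by_cases hex : ∃ i : ZMod 4, (v i).1 % 2 = (v (i + 1)).1 % 2
    · obtain ⟨i, hi⟩ := hex
      have hne : ∀ j : ZMod 4, j ≠ i → ¬((v j).1 % 2 = (v (j + 1)).1 % 2) := by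
        intro j hj hcj
        refine hj (hc ?_)
        show col (v j) (v (j + 1)) = col (v i) (v (i + 1))
        rw [hcol, hcol, if_pos hcj, if_pos hi]
      have h1 := hne (i + 1) (key2 i)
      have h2 := hne (i + 2) (key3 i)
      have h3 := hne (i + 3) (key4 i)
      rw [key7] at h1
      rw [key6] at h2
      rw [key5] at h3
      omega
    · push_neg at hex
      obtain ⟨x, -, hx⟩ := Finset.exists_max_image (Finset.univ : Finset (ZMod 4))
        (fun i => |(v i).1|) ⟨0, Finset.mem_univ 0⟩
      have hx1 : |(v (x + 1)).1| < |(v x).1| := by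
        refine lt_of_le_of_ne (hx _ (Finset.mem_univ _)) ?_
        intro habs
        rcases abs_eq_abs.1 habs with h | h
        · exact key2 x (hv (Subtype.ext h))
        · have := hex x
          omega
      have hcx : col (v x) (v (x + 1)) = some (v x).1 := by
        rw [hcol, if_neg (hex x), if_pos hx1]
      have hcx' : col (v (x - 1)) (v x) = some (v x).1 := by
        have hpar := hex (x - 1)
        rw [key8] at hpar
        rw [hcol, if_neg hpar, if_neg (not_lt.2 (hx (x - 1) (Finset.mem_univ _)))]
      apply key9 x
      apply hc
      show col (v (x - 1)) (v (x - 1 + 1)) = col (v x) (v (x + 1))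
      rw [key8, hcx', hcx]
end

section
/- A complete edge-colored graph on n vertices is Gallai (has no colorful triangle) if and only if for every subset b of vertices with |b| ≥ 1, the number of distinct colors appearing on edges within b is at most |b| − 1. -/
/-- A complete edge-colored graph is Gallai (no colorful triangle) iff for every
nonempty vertex subset b, the number of colors on edges within b is at most |b| - 1. -/
theorem gallai_iff_colors_lt_card {V Γ : Type*} [Fintype V] [DecidableEq V] [DecidableEq Γ]
    (col : V → V → Γ) (hsymm : ∀ u v, col u v = col v u) :
    (∀ u v w : V, u ≠ v → v ≠ w → u ≠ w →
        col u v = col v w ∨ col v w = col u w ∨ col u v = col u w) ↔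
    (∀ b : Finset V, b.Nonempty →
        (b.offDiag.image fun p => col p.1 p.2).card ≤ b.card - 1) := by
  constructor
  · intro hG b
    induction b using Finset.induction_on with
    | empty => intro h; simp at h
    | @insert v s hvs ih =>
      intro _
      rcases s.eq_empty_or_nonempty with rfl | hs
      · simp
      · have hS := ih hs
        set f : V × V → Γ := fun p => col p.1 p.2 with hf
        have hsub : (insert v s).offDiag.image f ⊆ s.offDiag.image f ∪ s.image (col v) := by
          intro c hc
          obtain ⟨⟨x, y⟩, hp, rfl⟩ := Finset.mem_image.mp hc
          rw [Finset.mem_offDiag] at hp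
          obtain ⟨hx, hy, hxy⟩ := hp
          rw [Finset.mem_insert] at hx hy
          rw [Finset.mem_union]
          rcases hx with hx | hx
          · rcases hy with hy | hy
            · exact absurd (hx.trans hy.symm) hxy
            · refine Or.inr (Finset.mem_image.mpr ⟨y, hy, ?_⟩)
              simp only [hf]
              rw [show x = v from hx]
          · rcases hy with hy | hy
            · refine Or.inr (Finset.mem_image.mpr ⟨x, hx, ?_⟩)
              simp only [hf]
              rw [show y = v from hy]
              exact hsymm v x
            · exact Or.inl (Finset.mem_image.mpr ⟨(x, y), Finset.mem_offDiag.mpr ⟨hx, hy, hxy⟩, rfl⟩)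
        have hd : ((s.image (col v)) \ (s.offDiag.image f)).card ≤ 1 := by
          rw [Finset.card_le_one]
          intro c1 h1 c2 h2
          rw [Finset.mem_sdiff] at h1 h2
          obtain ⟨h1m, hna⟩ := h1
          obtain ⟨h2m, hnb⟩ := h2
          obtain ⟨a, ha, rfl⟩ := Finset.mem_image.mp h1m
          obtain ⟨b, hb2, rfl⟩ := Finset.mem_image.mp h2m
          by_contra hne
          have hab : a ≠ b := fun h => hne (by rw [h])
          have hva : v ≠ a := fun h => hvs (h ▸ ha)
          have hvb : v ≠ b := fun h => hvs (h ▸ hb2)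
          rcases hG v a b hva hab hvb with h | h | h
          · exact hna (Finset.mem_image.mpr ⟨(a, b),
              Finset.mem_offDiag.mpr ⟨ha, hb2, hab⟩, h.symm⟩)
          · exact hnb (Finset.mem_image.mpr ⟨(a, b),
              Finset.mem_offDiag.mpr ⟨ha, hb2, hab⟩, h⟩)
          · exact hne h
        have hcard1 : 1 ≤ s.card := hs.card_pos
        calc ((insert v s).offDiag.image f).card
            ≤ (s.offDiag.image f ∪ s.image (col v)).card := Finset.card_le_card hsub
          _ = (s.offDiag.image f ∪ (s.image (col v) \ s.offDiag.image f)).card := by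
              rw [Finset.union_sdiff_self_eq_union]
          _ ≤ (s.offDiag.image f).card + ((s.image (col v)) \ (s.offDiag.image f)).card :=
              Finset.card_union_le _ _
          _ ≤ (s.card - 1) + 1 := add_le_add hS hd
          _ ≤ (insert v s).card - 1 := by
              rw [Finset.card_insert_of_notMem hvs]; omega
  · intro h u v w huv hvw huw
    by_contra hc
    push_neg at hc
    obtain ⟨h1, h2, h3⟩ := hc
    have hb := h {u, v, w} ⟨u, by simp⟩
    have hcard : ({u, v, w} : Finset V).card = 3 := by
      rw [Finset.card_insert_of_notMem (by simp [huv, huw]),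
        Finset.card_insert_of_notMem (by simp [hvw]), Finset.card_singleton]
    have hsub : ({col u v, col v w, col u w} : Finset Γ) ⊆
        ({u, v, w} : Finset V).offDiag.image (fun p => col p.1 p.2) := by
      intro c hc
      simp only [Finset.mem_insert, Finset.mem_singleton] at hc
      rcases hc with rfl | rfl | rfl
      · exact Finset.mem_image.mpr ⟨(u, v), Finset.mem_offDiag.mpr ⟨by simp, by simp, huv⟩, rfl⟩
      · exact Finset.mem_image.mpr ⟨(v, w), Finset.mem_offDiag.mpr ⟨by simp, by simp, hvw⟩, rfl⟩
      · exact Finset.mem_image.mpr ⟨(u, w), Finset.mem_offDiag.mpr ⟨by simp, by simp, huw⟩, rfl⟩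
    have h3' : ({col u v, col v w, col u w} : Finset Γ).card = 3 := by
      rw [Finset.card_insert_of_notMem (by simp [h1, h3]),
        Finset.card_insert_of_notMem (by simp [h2]), Finset.card_singleton]
    have hle := Finset.card_le_card hsub
    rw [hcard] at hb
    omega
end

section
/- In a complete edge-colored graph with no colorful triangle, for any two disjoint nonempty vertex subsets b and c, the number of colors appearing on edges between b and c but not appearing on any edge inside b is at most |c|. -/
/-- In a complete colored graph with no colorful triangle, for disjoint nonempty vertex
subsets b and c, the number of colors appearing between b and c but not inside b
is at most |c|. -/
theorem gallai_colors_between {V Γ : Type*} [Fintype V] [DecidableEq V] [DecidableEq Γ]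
    (col : V → V → Γ) (hsymm : ∀ u v, col u v = col v u)
    (gallai : ∀ u v w : V, u ≠ v → v ≠ w → u ≠ w →
        col u v = col v w ∨ col v w = col u w ∨ col u v = col u w)
    (b c : Finset V) (hdisj : Disjoint b c) (hb : b.Nonempty) (hc : c.Nonempty) :
    (((b ×ˢ c).image fun p => col p.1 p.2) \
        (b.offDiag.image fun p => col p.1 p.2)).card ≤ c.card := by
  classical
  set S := (((b ×ˢ c).image fun p => col p.1 p.2) \
      (b.offDiag.image fun p => col p.1 p.2)) with hS
  have hex : ∀ γ : Γ, ∃ w, γ ∈ S → w ∈ c ∧ ∃ u ∈ b, col u w = γ := by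
    intro γ
    by_cases h : γ ∈ S
    · obtain ⟨p, hp, hpc⟩ := Finset.mem_image.mp (Finset.mem_sdiff.mp h).1
      obtain ⟨hp1, hp2⟩ := Finset.mem_product.mp hp
      exact ⟨p.2, fun _ => ⟨hp2, p.1, hp1, hpc⟩⟩
    · exact ⟨hc.choose, fun h' => absurd h' h⟩
  choose f hf using hex
  have hnotin : ∀ γ ∈ S, ∀ x ∈ b, ∀ y ∈ b, x ≠ y → col x y ≠ γ := by
    intro γ hγ x hx y hy hxy h
    exact (Finset.mem_sdiff.mp hγ).2
      (Finset.mem_image.mpr ⟨(x, y), Finset.mem_offDiag.mpr ⟨hx, hy, hxy⟩, h⟩)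
  apply Finset.card_le_card_of_injOn f (fun γ h => (hf γ h).1)
  intro γ₁ h₁ γ₂ h₂ heq
  by_contra hne
  obtain ⟨hw1, u₁, hu₁, hc₁⟩ := hf γ₁ h₁
  obtain ⟨hw2, u₂, hu₂, hc₂⟩ := hf γ₂ h₂
  set w := f γ₁ with hw
  rw [← heq] at hc₂
  have hu₁w : u₁ ≠ w := fun h => (Finset.disjoint_left.mp hdisj hu₁) (h ▸ hw1)
  have hu₂w : u₂ ≠ w := fun h => (Finset.disjoint_left.mp hdisj hu₂) (h ▸ hw1)
  have hu12 : u₁ ≠ u₂ := fun h => hne (hc₁ ▸ hc₂ ▸ (h ▸ rfl))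
  rcases gallai u₁ u₂ w hu12 hu₂w hu₁w with h | h | h
  · exact hnotin γ₂ h₂ u₁ hu₁ u₂ hu₂ hu12 (h.trans hc₂)
  · exact hne (hc₁ ▸ hc₂ ▸ h.symm)
  · exact hnotin γ₁ h₁ u₁ hu₁ u₂ hu₂ hu12 (h.trans hc₁)
end

section
/- Every Gallai clique (complete edge-colored graph with no colorful triangle) on at least one vertex has a spanning monochrome, i.e., there is a color α such that the graph consisting of all edges of color α has a connected component containing every vertex. -/
/-!
Add the vertices one at a time, keeping a color `α` whose edges connect the vertices added so far.
When a new vertex `v` has an `α`-edge to them, `α` still works. Otherwise, for every `α`-edge `xy`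
among them the triangle `vxy` is not rainbow and `vx`, `vy` are not `α`, so `vx` and `vy` have the
same color; by `α`-connectivity all edges at `v` then share one color `β`, and the `β`-star at `v`
connects everything.
-/

open SimpleGraph

theorem SimpleGraph.Reachable.apply_eq_of_forall_adj {V β : Type*} {G : SimpleGraph V}
    {f : V → β} (hf : ∀ x y, G.Adj x y → f x = f y) {u v : V} (h : G.Reachable u v) :
    f u = f v := by
  obtain ⟨p⟩ := h
  induction p with
  | nil => rfl
  | cons hadj _ ih => exact (hf _ _ hadj).trans ih

theorem SimpleGraph.induce_insert_connected_of_forall_adj {V : Type*} {G : SimpleGraph V}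
    {s : Set V} {v : V} (hv : ∀ u ∈ s, G.Adj v u) : (G.induce (insert v s)).Connected := by
  refine induce_connected_of_patches v (Set.mem_insert v s) fun {w} hw => ?_
  refine ⟨{v, w}, Set.insert_subset_iff.mpr ⟨Set.mem_insert v s, Set.singleton_subset_iff.mpr hw⟩,
    by simp, by simp, ?_⟩
  rcases eq_or_ne v w with rfl | hvw
  · rfl
  · exact (induce_pair_connected_of_adj (hv w (hw.resolve_left hvw.symm))).preconnected _ _

namespace GallaiClique

variable {V Γ : Type*}

def IsGallai (col : V → V → Γ) : Prop :=
  ∀ u v w : V, u ≠ v → v ≠ w → u ≠ w →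
    col u v = col v w ∨ col v w = col u w ∨ col u v = col u w

def colorGraph (col : V → V → Γ) (α : Γ) : SimpleGraph V :=
  SimpleGraph.fromRel fun u v => col u v = α

theorem colorGraph_adj {col : V → V → Γ} (hsymm : ∀ u v, col u v = col v u) {α : Γ} {u v : V} :
    (colorGraph col α).Adj u v ↔ u ≠ v ∧ col u v = α := by
  simp [colorGraph, hsymm v u]

theorem col_eq_of_forall_not_adj {col : V → V → Γ} (hsymm : ∀ u v, col u v = col v u)
    (gallai : IsGallai col) {α : Γ} {s : Set V} (hs : ((colorGraph col α).induce s).Preconnected)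
    {v : V} (hvs : v ∉ s) (hv : ∀ u ∈ s, ¬ (colorGraph col α).Adj v u) {u w : V}
    (hu : u ∈ s) (hw : w ∈ s) : col v u = col v w := by
  have hcol : ∀ x ∈ s, col v x ≠ α := fun x hx hvx =>
    hv x hx ((colorGraph_adj hsymm).mpr ⟨fun h => hvs (h ▸ hx), hvx⟩)
  refine (hs ⟨u, hu⟩ ⟨w, hw⟩).apply_eq_of_forall_adj (f := fun x : s => col v x) ?_
  rintro ⟨x, hx⟩ ⟨y, hy⟩ hxy
  obtain ⟨hne, hxyα⟩ := (colorGraph_adj hsymm).mp hxy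
  rcases gallai v x y (fun h => hvs (h ▸ hx)) hne (fun h => hvs (h ▸ hy)) with h | h | h
  · exact absurd (h.trans hxyα) (hcol x hx)
  · exact absurd (hxyα ▸ h).symm (hcol y hy)
  · exact h

theorem exists_connected_induce_insert {col : V → V → Γ} (hsymm : ∀ u v, col u v = col v u)
    (gallai : IsGallai col) {α : Γ} {s : Set V} (hs : ((colorGraph col α).induce s).Connected)
    {v : V} (hvs : v ∉ s) : ∃ β, ((colorGraph col β).induce (insert v s)).Connected := by
  by_cases hadj : ∃ u ∈ s, (colorGraph col α).Adj v u
  · obtain ⟨u, hu, hvu⟩ := hadj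
    refine ⟨α, ?_⟩
    rw [Set.insert_eq]
    exact connected_induce_union (by simp) hs.preconnected rfl hu hvu
  · push Not at hadj
    obtain ⟨⟨u, hu⟩⟩ := hs.nonempty
    refine ⟨col v u, induce_insert_connected_of_forall_adj fun w hw => ?_⟩
    exact (colorGraph_adj hsymm).mpr ⟨fun h => hvs (h ▸ hw),
      col_eq_of_forall_not_adj hsymm gallai hs.preconnected hvs hadj hw hu⟩

theorem exists_connected_colorGraph [Finite V] [Nonempty V] {col : V → V → Γ}
    (hsymm : ∀ u v, col u v = col v u) (gallai : IsGallai col) :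
    ∃ α, (colorGraph col α).Connected := by
  obtain ⟨v⟩ := ‹Nonempty V›
  obtain ⟨α, hα⟩ := Set.Finite.induction_to_univ
    (C := fun s => ∃ α, ((colorGraph col α).induce s).Connected) {v} ⟨col v v, by simp⟩
    fun s hs ⟨_, hα⟩ =>
      have ⟨u, hu⟩ := Set.ne_univ_iff_exists_notMem s |>.mp hs
      ⟨u, hu, exists_connected_induce_insert hsymm gallai hα hu⟩
  exact ⟨α, (induceUnivIso _).connected_iff.mp hα⟩

end GallaiClique

/-- Every Gallai clique on at least one vertex has a spanning monochrome:
there is a color α such that the graph of α-colored edges is connected. -/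
theorem gallai_spanning_monochrome {V Γ : Type*} [Fintype V] [Nonempty V]
    (col : V → V → Γ) (hsymm : ∀ u v, col u v = col v u)
    (gallai : ∀ u v w : V, u ≠ v → v ≠ w → u ≠ w →
        col u v = col v w ∨ col v w = col u w ∨ col u v = col u w) :
    ∃ α : Γ, (SimpleGraph.fromRel fun u v => col u v = α).Connected :=
  GallaiClique.exists_connected_colorGraph hsymm gallai
end

section
/- A complete edge-colored graph on 4 vertices that is Gallai, uses at most 2 colors, and admits no nontrivial homogeneous partition must consist of two monochromatic paths on 4 vertices (P_3-paths): the edges of one color form a path through all 4 vertices, and the edges of the other color form the complementary path. -/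
/-- A partition (equivalence relation) of the vertices of a colored graph is homogeneous
if all edges between any two distinct parts have the same single color. -/
def IsHomogPartition {V Γ : Type*} (col : V → V → Γ) (s : Setoid V) : Prop :=
  ∀ u u' v v' : V, s.r u u' → s.r v v' → ¬ s.r u v → col u v = col u' v'

/-- A partition is nontrivial if it has more than one part and some part of size > 1. -/
def IsNontrivialPartition {V : Type*} (s : Setoid V) : Prop :=
  (∃ u v : V, ¬ s.r u v) ∧ (∃ u v : V, u ≠ v ∧ s.r u v)

namespace IrredGallaiAux

abbrev mkM (p q r s t u : Bool) : Fin 4 → Fin 4 → Bool :=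
  !![true,p,q,r;p,true,s,t;q,s,true,u;r,t,u,true]

set_option maxRecDepth 100000 in
set_option synthInstance.maxSize 5000 in
set_option synthInstance.maxHeartbeats 2000000 in
set_option maxHeartbeats 4000000 in
theorem key6 : ∀ p q r s t u : Bool,
    (¬ ∃ i j : Fin 4, i ≠ j ∧ ∀ k, k ≠ i → k ≠ j → mkM p q r s t u k i = mkM p q r s t u k j) →
    (¬ ∃ l : Fin 4, ∀ i j : Fin 4, i ≠ l → j ≠ l → mkM p q r s t u l i = mkM p q r s t u l j) →
    ∃ i0 i1 i2 i3 : Fin 4, i0 ≠ i1 ∧ i0 ≠ i2 ∧ i0 ≠ i3 ∧ i1 ≠ i2 ∧ i1 ≠ i3 ∧ i2 ≠ i3 ∧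
      mkM p q r s t u i1 i2 = mkM p q r s t u i0 i1 ∧
      mkM p q r s t u i2 i3 = mkM p q r s t u i0 i1 ∧
      mkM p q r s t u i1 i3 = mkM p q r s t u i0 i2 ∧
      mkM p q r s t u i0 i3 = mkM p q r s t u i0 i2 ∧
      mkM p q r s t u i0 i1 ≠ mkM p q r s t u i0 i2 := by
  decide

theorem key (b : Fin 4 → Fin 4 → Bool) (hs : ∀ i j, b i j = b j i)
    (hpair : ¬ ∃ i j : Fin 4, i ≠ j ∧ ∀ k, k ≠ i → k ≠ j → b k i = b k j)
    (htriple : ¬ ∃ l : Fin 4, ∀ i j : Fin 4, i ≠ l → j ≠ l → b l i = b l j) :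
    ∃ i0 i1 i2 i3 : Fin 4, i0 ≠ i1 ∧ i0 ≠ i2 ∧ i0 ≠ i3 ∧ i1 ≠ i2 ∧ i1 ≠ i3 ∧ i2 ≠ i3 ∧
      b i1 i2 = b i0 i1 ∧ b i2 i3 = b i0 i1 ∧ b i1 i3 = b i0 i2 ∧ b i0 i3 = b i0 i2 ∧
      b i0 i1 ≠ b i0 i2 := by
  have hM : ∀ i j : Fin 4, i ≠ j →
      mkM (b 0 1) (b 0 2) (b 0 3) (b 1 2) (b 1 3) (b 2 3) i j = b i j := by
    intro i j hij
    fin_cases i <;> fin_cases j <;>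
      first
        | exact absurd rfl hij
        | (simp [mkM] <;> exact hs _ _)
  obtain ⟨i0, i1, i2, i3, h01, h02, h03, h12, h13, h23, q1, q2, q3, q4, q5⟩ :=
    key6 (b 0 1) (b 0 2) (b 0 3) (b 1 2) (b 1 3) (b 2 3)
      (by
        rintro ⟨i, j, hij, h⟩
        exact hpair ⟨i, j, hij, fun k hki hkj => by
          rw [← hM k i hki, ← hM k j hkj]; exact h k hki hkj⟩)
      (by
        rintro ⟨l, h⟩
        exact htriple ⟨l, fun i j hil hjl => by
          rw [← hM l i (Ne.symm hil), ← hM l j (Ne.symm hjl)]; exact h i j hil hjl⟩)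
  rw [hM i1 i2 h12, hM i0 i1 h01] at q1
  rw [hM i2 i3 h23, hM i0 i1 h01] at q2
  rw [hM i1 i3 h13, hM i0 i2 h02] at q3
  rw [hM i0 i3 h03, hM i0 i2 h02] at q4
  rw [hM i0 i1 h01, hM i0 i2 h02] at q5
  exact ⟨i0, i1, i2, i3, h01, h02, h03, h12, h13, h23, q1, q2, q3, q4, q5⟩

theorem pair_part {V Γ : Type*} (col : V → V → Γ) (hsymm : ∀ u v, col u v = col v u)
    (u w z : V) (huw : u ≠ w) (hzu : z ≠ u) (hzw : z ≠ w)
    (hmod : ∀ y, y ≠ u → y ≠ w → col y u = col y w) :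
    ∃ s : Setoid V, IsHomogPartition col s ∧ IsNontrivialPartition s := by
  refine ⟨⟨fun x y => x = y ∨ ((x = u ∨ x = w) ∧ (y = u ∨ y = w)), ?_, ?_, ?_⟩, ?_, ?_, ?_⟩
  · exact fun x => Or.inl rfl
  · rintro x y (rfl | ⟨hx, hy⟩)
    · exact Or.inl rfl
    · exact Or.inr ⟨hy, hx⟩
  · rintro x y zz (rfl | ⟨hx, hy⟩) h2
    · exact h2
    · rcases h2 with rfl | ⟨_, hz⟩
      · exact Or.inr ⟨hx, hy⟩
      · exact Or.inr ⟨hx, hz⟩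
  · intro a a' c c' haa' hcc' hac
    have haa'' : a = a' ∨ ((a = u ∨ a = w) ∧ (a' = u ∨ a' = w)) := haa'
    have hcc'' : c = c' ∨ ((c = u ∨ c = w) ∧ (c' = u ∨ c' = w)) := hcc'
    have hac' : ¬ (a = c ∨ ((a = u ∨ a = w) ∧ (c = u ∨ c = w))) := hac
    have key2 : ∀ x y y', ¬(x = u ∨ x = w) → (y = u ∨ y = w) → (y' = u ∨ y' = w) →
        col x y = col x y' := by
      intro x y y' hx hy hy'
      have h := hmod x (fun h => hx (Or.inl h)) (fun h => hx (Or.inr h))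
      rcases hy with rfl | rfl <;> rcases hy' with rfl | rfl
      · rfl
      · exact h
      · exact h.symm
      · rfl
    by_cases hPa : a = u ∨ a = w
    · have hPc : ¬(c = u ∨ c = w) := fun hc => hac' (Or.inr ⟨hPa, hc⟩)
      have hc'' : c = c' := by
        rcases hcc'' with h | ⟨hc, _⟩
        · exact h
        · exact absurd hc hPc
      have hPa' : a' = u ∨ a' = w := by
        rcases haa'' with rfl | ⟨_, h⟩
        · exact hPa
        · exact h
      calc col a c = col c a := hsymm _ _
        _ = col c a' := key2 c a a' hPc hPa hPa'
        _ = col a' c := hsymm _ _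
        _ = col a' c' := by rw [← hc'']
    · have haa3 : a = a' := by
        rcases haa'' with h | ⟨h, _⟩
        · exact h
        · exact absurd h hPa
      by_cases hPc : c = u ∨ c = w
      · have hPc' : c' = u ∨ c' = w := by
          rcases hcc'' with rfl | ⟨_, h⟩
          · exact hPc
          · exact h
        rw [← haa3]; exact key2 a c c' hPa hPc hPc'
      · have hcc3 : c = c' := by
          rcases hcc'' with h | ⟨h, _⟩
          · exact h
          · exact absurd h hPc
        rw [← haa3, ← hcc3]
  · refine ⟨u, z, fun h => ?_⟩
    have h' : u = z ∨ ((u = u ∨ u = w) ∧ (z = u ∨ z = w)) := h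
    rcases h' with h' | ⟨_, h' | h'⟩
    · exact hzu h'.symm
    · exact hzu h'
    · exact hzw h'
  · exact ⟨u, w, huw, Or.inr ⟨Or.inl rfl, Or.inr rfl⟩⟩

theorem triple_part {V Γ : Type*} (col : V → V → Γ) (hsymm : ∀ u v, col u v = col v u)
    (l x y : V) (hxl : x ≠ l) (hyl : y ≠ l) (hxy : x ≠ y)
    (hmod : ∀ a b, a ≠ l → b ≠ l → col l a = col l b) :
    ∃ s : Setoid V, IsHomogPartition col s ∧ IsNontrivialPartition s := by
  refine ⟨⟨fun a b => a = b ∨ (a ≠ l ∧ b ≠ l), ?_, ?_, ?_⟩, ?_, ?_, ?_⟩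
  · exact fun a => Or.inl rfl
  · rintro a b (rfl | ⟨ha, hb⟩)
    · exact Or.inl rfl
    · exact Or.inr ⟨hb, ha⟩
  · rintro a b c (rfl | ⟨ha, hb⟩) h2
    · exact h2
    · rcases h2 with rfl | ⟨_, hc⟩
      · exact Or.inr ⟨ha, hb⟩
      · exact Or.inr ⟨ha, hc⟩
  · intro a a' c c' haa' hcc' hac
    have haa'' : a = a' ∨ (a ≠ l ∧ a' ≠ l) := haa'
    have hcc'' : c = c' ∨ (c ≠ l ∧ c' ≠ l) := hcc'
    have hac' : ¬ (a = c ∨ (a ≠ l ∧ c ≠ l)) := hac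
    have hor : a = l ∨ c = l := by
      by_contra h
      push_neg at h
      exact hac' (Or.inr ⟨h.1, h.2⟩)
    rcases hor with hal | hcl
    · have ha' : a' = l := by
        rcases haa'' with h | ⟨h, _⟩
        · rw [← h]; exact hal
        · exact absurd hal h
      have hc : c ≠ l := fun h => hac' (Or.inl (hal.trans h.symm))
      have hc' : c' ≠ l := by
        rcases hcc'' with h | ⟨_, h⟩
        · rw [← h]; exact hc
        · exact h
      rw [hal, ha']
      exact hmod c c' hc hc'
    · have hc' : c' = l := by
        rcases hcc'' with h | ⟨h, _⟩
        · rw [← h]; exact hcl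
        · exact absurd hcl h
      have ha : a ≠ l := fun h => hac' (Or.inl (h.trans hcl.symm))
      have ha' : a' ≠ l := by
        rcases haa'' with h | ⟨_, h⟩
        · rw [← h]; exact ha
        · exact h
      rw [hcl, hc']
      calc col a l = col l a := hsymm _ _
        _ = col l a' := hmod a a' ha ha'
        _ = col a' l := hsymm _ _
  · refine ⟨l, x, fun h => ?_⟩
    have h' : l = x ∨ (l ≠ l ∧ x ≠ l) := h
    rcases h' with h' | ⟨h', _⟩
    · exact hxl h'.symm
    · exact h' rfl
  · exact ⟨x, y, hxy, Or.inr ⟨hxl, hyl⟩⟩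

end IrredGallaiAux

open IrredGallaiAux in
/-- A Gallai 2-colored complete graph on 4 vertices with no nontrivial homogeneous
partition consists of two complementary monochromatic paths on the 4 vertices. -/
theorem irreducible_gallai_four {V Γ : Type*} [Fintype V] (col : V → V → Γ)
    (hsymm : ∀ u v, col u v = col v u) (hcard : Fintype.card V = 4)
    (gallai : ∀ u v w : V, u ≠ v → v ≠ w → u ≠ w →
        col u v = col v w ∨ col v w = col u w ∨ col u v = col u w)
    (two : ∃ α β : Γ, ∀ u v : V, u ≠ v → col u v = α ∨ col u v = β)
    (irred : ¬ ∃ s : Setoid V, IsHomogPartition col s ∧ IsNontrivialPartition s) :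
    ∃ (α β : Γ) (v : Fin 4 → V), α ≠ β ∧ Function.Bijective v ∧
      col (v 0) (v 1) = α ∧ col (v 1) (v 2) = α ∧ col (v 2) (v 3) = α ∧
      col (v 0) (v 2) = β ∧ col (v 1) (v 3) = β ∧ col (v 0) (v 3) = β := by
  classical
  obtain ⟨α, β, htwo⟩ := two
  have e : Fin 4 ≃ V := (Fintype.equivFinOfCardEq hcard).symm
  have einj := e.injective
  by_cases hab : α = β
  · exfalso
    apply irred
    have hall : ∀ x y : V, x ≠ y → col x y = α := by
      intro x y h
      rcases htwo x y h with h' | h'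
      · exact h'
      · rw [h', hab]
    exact pair_part col hsymm (e 0) (e 1) (e 2)
      (einj.ne (by decide)) (einj.ne (by decide)) (einj.ne (by decide))
      (fun y h1 h2 => (hall y _ h1).trans (hall y _ h2).symm)
  · set B : Fin 4 → Fin 4 → Bool := fun i j => decide (col (e i) (e j) = α) with hB
    have hBs : ∀ i j, B i j = B j i := by
      intro i j
      simp only [hB]
      exact decide_eq_decide.mpr (by rw [hsymm])
    have hcol : ∀ {i j k l : Fin 4}, i ≠ j → k ≠ l → B i j = B k l →
        col (e i) (e j) = col (e k) (e l) := by
      intro i j k l hij hkl hb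
      have h1 := htwo (e i) (e j) (einj.ne hij)
      have h2 := htwo (e k) (e l) (einj.ne hkl)
      by_cases h : col (e i) (e j) = α
      · have hb1 : B i j = true := decide_eq_true h
        have hb2 : B k l = true := hb ▸ hb1
        have h' : col (e k) (e l) = α := of_decide_eq_true hb2
        rw [h, h']
      · have hb1 : B i j = false := decide_eq_false h
        have hb2 : B k l = false := hb ▸ hb1
        have h' : ¬ col (e k) (e l) = α := of_decide_eq_false hb2
        rw [h1.resolve_left h, h2.resolve_left h']
    obtain ⟨i0, i1, i2, i3, h01, h02, h03, h12, h13, h23, q1, q2, q3, q4, q5⟩ :=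
      key B hBs
        (by
          rintro ⟨i, j, hij, h⟩
          apply irred
          obtain ⟨k, hki, hkj⟩ :=
            (show ∀ i j : Fin 4, ∃ k : Fin 4, k ≠ i ∧ k ≠ j by decide) i j
          refine pair_part col hsymm (e i) (e j) (e k) (einj.ne hij)
            (einj.ne hki) (einj.ne hkj) ?_
          intro y hy1 hy2
          have hky : e (e.symm y) = y := e.apply_symm_apply y
          have hki' : e.symm y ≠ i := fun hh => hy1 (by rw [← hky, hh])
          have hkj' : e.symm y ≠ j := fun hh => hy2 (by rw [← hky, hh])
          have := hcol hki' hkj' (h _ hki' hkj')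
          rwa [hky] at this)
        (by
          rintro ⟨l, h⟩
          apply irred
          obtain ⟨i, j, hij, hil, hjl⟩ :=
            (show ∀ l : Fin 4, ∃ i j : Fin 4, i ≠ j ∧ i ≠ l ∧ j ≠ l by decide) l
          refine triple_part col hsymm (e l) (e i) (e j) (einj.ne hil)
            (einj.ne hjl) (einj.ne hij) ?_
          intro a b ha hb
          have hay : e (e.symm a) = a := e.apply_symm_apply a
          have hby : e (e.symm b) = b := e.apply_symm_apply b
          have ha' : e.symm a ≠ l := fun hh => ha (by rw [← hay, hh])
          have hb' : e.symm b ≠ l := fun hh => hb (by rw [← hby, hh])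
          have := hcol (Ne.symm ha') (Ne.symm hb') (h _ _ ha' hb')
          rwa [hay, hby] at this)
    have c12 : col (e i1) (e i2) = col (e i0) (e i1) := hcol h12 h01 q1
    have c23 : col (e i2) (e i3) = col (e i0) (e i1) := hcol h23 h01 q2
    have c13 : col (e i1) (e i3) = col (e i0) (e i2) := hcol h13 h02 q3
    have c03 : col (e i0) (e i3) = col (e i0) (e i2) := hcol h03 h02 q4
    have cne : col (e i0) (e i1) ≠ col (e i0) (e i2) := by
      intro hcc
      exact q5 (decide_eq_decide.mpr (by rw [hcc]))
    have hvinj : Function.Injective (![i0, i1, i2, i3]) := by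
      intro a b hab
      fin_cases a <;> fin_cases b <;>
        first
          | rfl
          | (exfalso; simp only [Matrix.cons_val_zero, Matrix.cons_val_one,
              Matrix.head_cons, Matrix.cons_val_two, Matrix.tail_cons,
              Matrix.cons_val_three] at hab;
             first
               | exact h01 hab | exact h02 hab | exact h03 hab
               | exact h12 hab | exact h13 hab | exact h23 hab
               | exact h01 hab.symm | exact h02 hab.symm | exact h03 hab.symm
               | exact h12 hab.symm | exact h13 hab.symm | exact h23 hab.symm)
    refine ⟨col (e i0) (e i1), col (e i0) (e i2), fun t => e (![i0, i1, i2, i3] t),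
      cne, ?_, rfl, c12, c23, rfl, c13, c03⟩
    have hinj : Function.Injective (fun t => e (![i0, i1, i2, i3] t)) :=
      fun a b hab => hvinj (einj hab)
    exact (Fintype.bijective_iff_injective_and_card _).mpr ⟨hinj, by simp [hcard]⟩
end

section
/- The maximum number of vertices of an exact Gallai clique colored with exactly k colors is 5^{k/2} if k is even and 2·5^{(k−1)/2} if k is odd. -/
set_option maxHeartbeats 1000000
set_option linter.unusedSectionVars false

namespace EGallai

/-- The extremal function. -/
def F (k : ℕ) : ℕ := if Even k then 5 ^ (k / 2) else 2 * 5 ^ (k / 2)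

lemma F_zero : F 0 = 1 := by simp [F]

lemma F_one : F 1 = 2 := by simp [F, Nat.even_iff]

lemma F_two : F 2 = 5 := by simp [F]

lemma F_pos (k : ℕ) : 0 < F k := by unfold F; split <;> positivity

lemma F_add_two (k : ℕ) : F (k + 2) = 5 * F k := by
  have h1 : (k + 2) % 2 = k % 2 := by omega
  have h2 : (k + 2) / 2 = k / 2 + 1 := by omega
  unfold F
  simp only [Nat.even_iff, h1, h2, pow_succ]
  split <;> ring

lemma two_F_le (k : ℕ) : 2 * F k ≤ F (k + 1) := by
  unfold F
  rcases Nat.even_or_odd k with h | h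
  · have hk := Nat.even_iff.mp h
    have h' : ¬ (k + 1) % 2 = 0 := by omega
    have hd : (k + 1) / 2 = k / 2 := by omega
    simp only [Nat.even_iff, hk, h', hd]
    simp
  · have hk := Nat.odd_iff.mp h
    have h1 : ¬ k % 2 = 0 := by omega
    have h2 : (k + 1) % 2 = 0 := by omega
    have hd : (k + 1) / 2 = k / 2 + 1 := by omega
    simp only [Nat.even_iff, h1, h2, hd, pow_succ]
    have := pow_pos (by norm_num : (0:ℕ) < 5) (k / 2)
    simp only [if_true, if_false]
    nlinarith
 
lemma F_mono : Monotone F := by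
  apply monotone_nat_of_le_succ
  intro k
  have := two_F_le k
  have := F_pos k
  omega

lemma F_eq_target (k : ℕ) :
    (if Even k then 5 ^ (k / 2) else 2 * 5 ^ ((k - 1) / 2)) = F k := by
  unfold F
  rcases Nat.even_or_odd k with h | h
  · rw [if_pos h, if_pos h]
  · have hk := Nat.odd_iff.mp h
    have h' : ¬ Even k := by simp [Nat.even_iff, hk]
    have hd : (k - 1) / 2 = k / 2 := by omega
    rw [if_neg h', if_neg h', hd]

/-! ### Patterns for prime quotients -/

def patP4 (i j : Fin 4) : Bool := (i.val + 1 == j.val) || (j.val + 1 == i.val)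

def patC5 (i j : Fin 5) : Bool := ((i.val + 1) % 5 == j.val) || ((j.val + 1) % 5 == i.val)

structure PatFacts {m : ℕ} (pat : Fin m → Fin m → Bool) : Prop where
  symm : ∀ i j, pat i j = pat j i
  incid : ∀ i : Fin m, (∃ j, j ≠ i ∧ pat i j = true) ∧ (∃ j, j ≠ i ∧ pat i j = false)
  prime : ∀ T : Finset (Fin m), (∀ l ∉ T, ∀ j ∈ T, ∀ j' ∈ T, pat j l = pat j' l) →
      T.card ≤ 1 ∨ T = Finset.univ
  kill : ∀ (pb : Bool) (i : Fin m), ∃ l l', l ≠ i ∧ l' ≠ i ∧ l ≠ l' ∧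
      pat l i = pb ∧ pat l' i = !pb ∧ pat l l' = pb
  others3 : ∀ i : Fin m, ∃ a b c : Fin m, a ≠ i ∧ b ≠ i ∧ c ≠ i ∧ a ≠ b ∧ a ≠ c ∧ b ≠ c

lemma patP4_facts : PatFacts patP4 :=
  ⟨by decide, by decide, by decide, by decide, by decide⟩

lemma patC5_facts : PatFacts patC5 :=
  ⟨by decide, by decide, by decide, by decide, by decide⟩

/-! ### Gallai hypotheses -/

variable {V : Type} {Γ : Type} [DecidableEq V] [DecidableEq Γ]

structure Gallai (col : V → V → Γ) : Prop where
  symm : ∀ u v, col u v = col v u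
  two : ∀ u v w : V, u ≠ v → v ≠ w → u ≠ w →
      col u v = col v w ∨ col v w = col u w ∨ col u v = col u w
  nmono : ∀ u v w : V, u ≠ v → v ≠ w → u ≠ w →
      ¬ (col u v = col v w ∧ col u v = col u w)

/-- If the two "far" edges of a triangle have distinct colors `b ≠ c`, the third edge has
one of those colors. -/
lemma Gallai.pin {col : V → V → Γ} (h : Gallai col) {u v w : V}
    (huv : u ≠ v) (hvw : v ≠ w) (huw : u ≠ w) {b c : Γ}
    (hb : col v w = b) (hc : col u w = c) (hbc : b ≠ c) :
    col u v = b ∨ col u v = c := by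
  rcases h.two u v w huv hvw huw with h1 | h1 | h1
  · exact Or.inl (hb ▸ h1)
  · exact absurd (hb ▸ hc ▸ h1) hbc
  · exact Or.inr (hc ▸ h1)

lemma Gallai.mono3 {col : V → V → Γ} (h : Gallai col) {u v w : V}
    (huv : u ≠ v) (hvw : v ≠ w) (huw : u ≠ w) {a : Γ}
    (h1 : col u v = a) (h2 : col v w = a) (h3 : col u w = a) : False :=
  h.nmono u v w huv hvw huw ⟨h1.trans h2.symm, h1.trans h3.symm⟩

/-! ### Ramsey for 6 vertices with two colors -/

lemma three_of_five : ∀ b : Fin 5 → Bool, ∃ i j k : Fin 5,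
    i ≠ j ∧ i ≠ k ∧ j ≠ k ∧ b i = b j ∧ b i = b k := by decide

lemma eq_of_two {a b x y : Γ} (hab : a ≠ b) (h1 : x = a ∨ x = b) (h2 : y = a ∨ y = b)
    (hiff : (x = a) ↔ (y = a)) : x = y := by
  rcases h1 with rfl | rfl <;> rcases h2 with rfl | rfl <;> simp_all

lemma R33 {col : V → V → Γ} (h : Gallai col) (v : Fin 6 → V)
    (hinj : ∀ i j, i ≠ j → v i ≠ v j) (a b : Γ)
    (hc : ∀ i j, i ≠ j → col (v i) (v j) = a ∨ col (v i) (v j) = b) : False := by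
  by_cases hab : a = b
  · subst hab
    have h01 : col (v 0) (v 1) = a := (hc 0 1 (by decide)).elim id id
    have h12 : col (v 1) (v 2) = a := (hc 1 2 (by decide)).elim id id
    have h02 : col (v 0) (v 2) = a := (hc 0 2 (by decide)).elim id id
    exact h.mono3 (hinj 0 1 (by decide)) (hinj 1 2 (by decide)) (hinj 0 2 (by decide)) h01 h12 h02
  obtain ⟨i, j, k, hij, hik, hjk, h1, h2⟩ :=
    three_of_five (fun i => decide (col (v 0) (v i.succ) = a))
  set y := v i.succ with hy
  set z := v j.succ with hz
  set w := v k.succ with hw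
  have hne0y : v 0 ≠ y := hinj 0 i.succ (Fin.succ_ne_zero i).symm
  have hne0z : v 0 ≠ z := hinj 0 j.succ (Fin.succ_ne_zero j).symm
  have hne0w : v 0 ≠ w := hinj 0 k.succ (Fin.succ_ne_zero k).symm
  have hneyz : y ≠ z := hinj i.succ j.succ (fun hh => hij (Fin.succ_inj.mp hh))
  have hneyw : y ≠ w := hinj i.succ k.succ (fun hh => hik (Fin.succ_inj.mp hh))
  have hnezw : z ≠ w := hinj j.succ k.succ (fun hh => hjk (Fin.succ_inj.mp hh))
  have hcy := hc 0 i.succ (Fin.succ_ne_zero i).symm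
  have hcz := hc 0 j.succ (Fin.succ_ne_zero j).symm
  have hcw := hc 0 k.succ (Fin.succ_ne_zero k).symm
  have e1 : col (v 0) y = col (v 0) z := eq_of_two hab hcy hcz (decide_eq_decide.mp h1)
  have e2 : col (v 0) y = col (v 0) w := eq_of_two hab hcy hcw (decide_eq_decide.mp h2)
  have hyzc := hc i.succ j.succ (fun hh => hij (Fin.succ_inj.mp hh))
  have hywc := hc i.succ k.succ (fun hh => hik (Fin.succ_inj.mp hh))
  have hzwc := hc j.succ k.succ (fun hh => hjk (Fin.succ_inj.mp hh))
  have n1 : col y z ≠ col (v 0) y := fun hh => h.mono3 hne0y hneyz hne0z rfl hh e1.symm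
  have n2 : col y w ≠ col (v 0) y := fun hh => h.mono3 hne0y hneyw hne0w rfl hh e2.symm
  have n3 : col z w ≠ col (v 0) y := fun hh => h.mono3 hne0z hnezw hne0w e1.symm hh e2.symm
  rcases hcy with h0 | h0
  · have g1 : col y z = b := hyzc.resolve_left (h0 ▸ n1)
    have g2 : col z w = b := hzwc.resolve_left (h0 ▸ n3)
    have g3 : col y w = b := hywc.resolve_left (h0 ▸ n2)
    exact h.mono3 hneyz hnezw hneyw g1 g2 g3
  · have g1 : col y z = a := hyzc.resolve_right (h0 ▸ n1)
    have g2 : col z w = a := hzwc.resolve_right (h0 ▸ n3)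
    have g3 : col y w = a := hywc.resolve_right (h0 ▸ n2)
    exact h.mono3 hneyz hnezw hneyw g1 g2 g3


/-! ### Shapes of canonical Gallai partitions -/

def ShapeA (col : V → V → Γ) (S : Finset V) : Prop :=
  ∃ (A B : Finset V) (a : Γ), A.Nonempty ∧ B.Nonempty ∧ Disjoint A B ∧ A ∪ B = S ∧
    ∀ u ∈ A, ∀ v ∈ B, col u v = a

def ShapeP {m : ℕ} (pat : Fin m → Fin m → Bool) (col : V → V → Γ) (S : Finset V) : Prop :=
  ∃ (P : Fin m → Finset V) (a b : Γ), a ≠ b ∧ (∀ i, (P i).Nonempty) ∧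
    (∀ i j : Fin m, i ≠ j → Disjoint (P i) (P j)) ∧ Finset.univ.biUnion P = S ∧
    ∀ i j : Fin m, i ≠ j → ∀ u ∈ P i, ∀ v ∈ P j, col u v = if pat i j then a else b

def GP (col : V → V → Γ) (S : Finset V) : Prop :=
  ShapeA col S ∨ ShapeP patP4 col S ∨ ShapeP patC5 col S

/-- The set of colors appearing between distinct vertices of `S`. -/
def colsOn (col : V → V → Γ) (S : Finset V) : Finset Γ :=
  S.offDiag.image fun p => col p.1 p.2

lemma mem_colsOn {col : V → V → Γ} {S : Finset V} {u v : V}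
    (hu : u ∈ S) (hv : v ∈ S) (huv : u ≠ v) : col u v ∈ colsOn col S :=
  Finset.mem_image.mpr ⟨(u, v), Finset.mem_offDiag.mpr ⟨hu, hv, huv⟩, rfl⟩

lemma colsOn_subset {col : V → V → Γ} {A S : Finset V} (hAS : A ⊆ S) :
    colsOn col A ⊆ colsOn col S := by
  intro c hc
  obtain ⟨p, hp, rfl⟩ := Finset.mem_image.mp hc
  obtain ⟨h1, h2, h3⟩ := Finset.mem_offDiag.mp hp
  exact mem_colsOn (hAS h1) (hAS h2) h3

lemma colsOn_elim {col : V → V → Γ} {A : Finset V} {c : Γ} (hc : c ∈ colsOn col A) :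
    ∃ u ∈ A, ∃ v ∈ A, u ≠ v ∧ col u v = c := by
  obtain ⟨p, hp, rfl⟩ := Finset.mem_image.mp hc
  obtain ⟨h1, h2, h3⟩ := Finset.mem_offDiag.mp hp
  exact ⟨p.1, h1, p.2, h2, h3, rfl⟩

/-- A color which is constant from all of `A` to some external vertex never appears inside `A`. -/
lemma no_color_inside {col : V → V → Γ} (h : Gallai col) {A : Finset V} {b : V} {a : Γ}
    (hb : b ∉ A) (hcol : ∀ u ∈ A, col u b = a) : a ∉ colsOn col A := by
  intro ha
  obtain ⟨u, hu, v, hv, huv, hcuv⟩ := colsOn_elim ha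
  have hvb : v ≠ b := by intro hh; subst hh; exact hb hv
  have hub : u ≠ b := by intro hh; subst hh; exact hb hu
  exact h.mono3 huv hvb hub hcuv (hcol v hv) (hcol u hu)

/-! ### The counting argument -/

lemma countP (col : V → V → Γ) (h : Gallai col) {m : ℕ} (pat : Fin m → Fin m → Bool)
    (pf : PatFacts pat) (hm : m ≤ 5) {n : ℕ}
    (ih : ∀ S : Finset V, S.card ≤ n → S.card ≤ F ((colsOn col S).card))
    (S : Finset V) (hS : S.card ≤ n + 1) (h2 : 1 < S.card) (hP : ShapeP pat col S) :
    S.card ≤ F ((colsOn col S).card) := by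
  classical
  obtain ⟨P, a, b, hab, hne, hdisj, hun, hcol⟩ := hP
  set k := (colsOn col S).card with hk
  have hPS : ∀ i, P i ⊆ S := fun i => by
    rw [← hun]; exact Finset.subset_biUnion_of_mem P (Finset.mem_univ i)
  have hSsum : S.card = ∑ i, (P i).card := by
    rw [← hun, Finset.card_biUnion]
    intro x _ y _ hxy
    exact hdisj x y hxy
  -- both colors appear on S
  obtain ⟨s0, hs0⟩ := Finset.card_pos.mp (by omega : 0 < S.card)
  obtain ⟨i0, _, hi0⟩ := Finset.mem_biUnion.mp (hun ▸ hs0 : s0 ∈ Finset.univ.biUnion P)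
  have hmem_ab : ∀ i : Fin m, ∀ (bb : Bool), (∃ j, j ≠ i ∧ pat i j = bb) →
      (if bb then a else b) ∈ colsOn col S := by
    intro i bb ⟨j, hj, hpat⟩
    obtain ⟨u, hu⟩ := hne i
    obtain ⟨v, hv⟩ := hne j
    have huv : u ≠ v := fun hh => Finset.disjoint_left.mp (hdisj i j (Ne.symm hj)) hu (hh ▸ hv)
    have := hcol i j (Ne.symm hj) u hu v hv
    rw [hpat] at this
    exact this ▸ mem_colsOn (hPS i hu) (hPS j hv) huv
  have haS : a ∈ colsOn col S := hmem_ab i0 true (pf.incid i0).1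
  have hbS : b ∈ colsOn col S := hmem_ab i0 false (pf.incid i0).2
  have hk2 : 2 ≤ k := by
    have : ({a, b} : Finset Γ) ⊆ colsOn col S := by
      intro c hc
      rcases Finset.mem_insert.mp hc with rfl | hc
      · exact haS
      · exact (Finset.mem_singleton.mp hc) ▸ hbS
    have := Finset.card_le_card this
    rwa [Finset.card_pair hab] at this
  -- inside parts, both a and b are excluded
  have hinside : ∀ i : Fin m, (colsOn col (P i)).card ≤ k - 2 := by
    intro i
    have hnota : a ∉ colsOn col (P i) := by
      obtain ⟨j, hj, hpat⟩ := (pf.incid i).1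
      obtain ⟨v, hv⟩ := hne j
      refine no_color_inside h (Finset.disjoint_left.mp (hdisj j i hj) hv) (fun u hu => ?_)
      have := hcol i j (Ne.symm hj) u hu v hv
      rwa [hpat, if_pos rfl] at this
    have hnotb : b ∉ colsOn col (P i) := by
      obtain ⟨j, hj, hpat⟩ := (pf.incid i).2
      obtain ⟨v, hv⟩ := hne j
      refine no_color_inside h (Finset.disjoint_left.mp (hdisj j i hj) hv) (fun u hu => ?_)
      have := hcol i j (Ne.symm hj) u hu v hv
      rwa [hpat] at this
    have hsub : colsOn col (P i) ⊆ ((colsOn col S).erase a).erase b := by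
      intro c hc
      refine Finset.mem_erase.mpr ⟨fun hh => hnotb (hh ▸ hc), ?_⟩
      exact Finset.mem_erase.mpr ⟨fun hh => hnota (hh ▸ hc), colsOn_subset (hPS i) hc⟩
    have := Finset.card_le_card hsub
    rwa [Finset.card_erase_of_mem (Finset.mem_erase.mpr ⟨Ne.symm hab, hbS⟩),
      Finset.card_erase_of_mem haS] at this
  -- parts are strictly smaller
  have hpart_lt : ∀ i : Fin m, (P i).card < S.card := by
    intro i
    obtain ⟨j, hj, _⟩ := (pf.incid i).1
    have hsum2 : (P i).card + (P j).card ≤ ∑ l, (P l).card := by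
      have : ({i, j} : Finset (Fin m)) ⊆ Finset.univ := Finset.subset_univ _
      calc (P i).card + (P j).card = ∑ l ∈ ({i, j} : Finset (Fin m)), (P l).card := by
            rw [Finset.sum_pair (Ne.symm hj)]
        _ ≤ ∑ l, (P l).card := Finset.sum_le_sum_of_subset this
    have := Finset.card_pos.mpr (hne j)
    omega
  have hpart_le : ∀ i : Fin m, (P i).card ≤ F (k - 2) := by
    intro i
    have h1 : (P i).card ≤ n := by have := hpart_lt i; omega
    exact le_trans (ih (P i) h1) (F_mono (hinside i))
  have : S.card ≤ m * F (k - 2) := by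
    rw [hSsum]
    calc ∑ i, (P i).card ≤ ∑ _i : Fin m, F (k - 2) := Finset.sum_le_sum (fun i _ => hpart_le i)
      _ = m * F (k - 2) := by rw [Finset.sum_const, Finset.card_univ, Fintype.card_fin, smul_eq_mul]
  have h5 : 5 * F (k - 2) = F k := by
    have := F_add_two (k - 2)
    have hkk : k - 2 + 2 = k := by omega
    rw [hkk] at this
    omega
  have : m * F (k - 2) ≤ 5 * F (k - 2) := Nat.mul_le_mul_right _ hm
  omega

lemma count_main (col : V → V → Γ) (h : Gallai col)
    (hgp : ∀ S : Finset V, 2 ≤ S.card → GP col S) :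
    ∀ n, ∀ S : Finset V, S.card ≤ n → S.card ≤ F ((colsOn col S).card) := by
  intro n
  induction n with
  | zero =>
    intro S hS
    have := F_pos ((colsOn col S).card)
    omega
  | succ n ih =>
    intro S hS
    by_cases hsmall : S.card ≤ 1
    · have := F_pos ((colsOn col S).card)
      have : 1 ≤ F ((colsOn col S).card) := this
      omega
    push_neg at hsmall
    have h2 : 2 ≤ S.card := hsmall
    set k := (colsOn col S).card with hk
    rcases hgp S h2 with hA | hP | hP
    · -- Shape A
      obtain ⟨A, B, a, hAne, hBne, hdisj, hun, hcAB⟩ := hA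
      have hAS : A ⊆ S := hun ▸ Finset.subset_union_left
      have hBS : B ⊆ S := hun ▸ Finset.subset_union_right
      have hcards : A.card + B.card = S.card := by
        rw [← hun, Finset.card_union_of_disjoint hdisj]
      obtain ⟨b0, hb0⟩ := hBne
      obtain ⟨a0, ha0⟩ := hAne
      have haS : a ∈ colsOn col S := by
        have hne : a0 ≠ b0 := fun hh => (Finset.disjoint_left.mp hdisj ha0) (hh ▸ hb0)
        exact (hcAB a0 ha0 b0 hb0) ▸ mem_colsOn (hAS ha0) (hBS hb0) hne
      have hkpos : 1 ≤ k := by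
        rw [hk]; exact Finset.card_pos.mpr ⟨a, haS⟩
      -- colors inside A avoid a
      have hconA : a ∉ colsOn col A :=
        no_color_inside h (Finset.disjoint_left.mp hdisj.symm hb0)
          (fun u hu => hcAB u hu b0 hb0)
      have hconB : a ∉ colsOn col B := by
        apply no_color_inside h (Finset.disjoint_left.mp hdisj ha0)
        intro u hu
        exact (h.symm a0 u) ▸ hcAB a0 ha0 u hu
      have hsubA : colsOn col A ⊆ (colsOn col S).erase a := fun c hc =>
        Finset.mem_erase.mpr ⟨fun hh => hconA (hh ▸ hc), colsOn_subset hAS hc⟩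
      have hsubB : colsOn col B ⊆ (colsOn col S).erase a := fun c hc =>
        Finset.mem_erase.mpr ⟨fun hh => hconB (hh ▸ hc), colsOn_subset hBS hc⟩
      have hcardA : (colsOn col A).card ≤ k - 1 := by
        have := Finset.card_le_card hsubA
        rwa [Finset.card_erase_of_mem haS] at this
      have hcardB : (colsOn col B).card ≤ k - 1 := by
        have := Finset.card_le_card hsubB
        rwa [Finset.card_erase_of_mem haS] at this
      have hAn : A.card ≤ n := by
        have : A.card < S.card := by
          have : 0 < B.card := Finset.card_pos.mpr ⟨b0, hb0⟩
          omega
        omega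
      have hBn : B.card ≤ n := by
        have : 0 < A.card := Finset.card_pos.mpr ⟨a0, ha0⟩
        omega
      have iA := le_trans (ih A hAn) (F_mono hcardA)
      have iB := le_trans (ih B hBn) (F_mono hcardB)
      have := two_F_le (k - 1)
      have hkk : (k - 1) + 1 = k := by omega
      rw [hkk] at this
      omega
    · exact countP col h patP4 patP4_facts (by norm_num) ih S hS hsmall hP
    · exact countP col h patC5 patC5_facts (by norm_num) ih S hS hsmall hP


/-! ### Helpers for building shapes -/

lemma ite_ne {a b : Γ} (hab : a ≠ b) (p q : Bool) :
    ((if p then a else b) = (if q then a else b)) ↔ p = q := by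
  cases p <;> cases q <;> simp [hab, hab.symm]

lemma R33' {col : V → V → Γ} (h : Gallai col) (v0 v1 v2 v3 v4 v5 : V) (a b : Γ)
    (n01 : v0 ≠ v1) (n02 : v0 ≠ v2) (n03 : v0 ≠ v3) (n04 : v0 ≠ v4) (n05 : v0 ≠ v5)
    (n12 : v1 ≠ v2) (n13 : v1 ≠ v3) (n14 : v1 ≠ v4) (n15 : v1 ≠ v5)
    (n23 : v2 ≠ v3) (n24 : v2 ≠ v4) (n25 : v2 ≠ v5)
    (n34 : v3 ≠ v4) (n35 : v3 ≠ v5) (n45 : v4 ≠ v5)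
    (c01 : col v0 v1 = a ∨ col v0 v1 = b) (c02 : col v0 v2 = a ∨ col v0 v2 = b)
    (c03 : col v0 v3 = a ∨ col v0 v3 = b) (c04 : col v0 v4 = a ∨ col v0 v4 = b)
    (c05 : col v0 v5 = a ∨ col v0 v5 = b) (c12 : col v1 v2 = a ∨ col v1 v2 = b)
    (c13 : col v1 v3 = a ∨ col v1 v3 = b) (c14 : col v1 v4 = a ∨ col v1 v4 = b)
    (c15 : col v1 v5 = a ∨ col v1 v5 = b) (c23 : col v2 v3 = a ∨ col v2 v3 = b)
    (c24 : col v2 v4 = a ∨ col v2 v4 = b) (c25 : col v2 v5 = a ∨ col v2 v5 = b)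
    (c34 : col v3 v4 = a ∨ col v3 v4 = b) (c35 : col v3 v5 = a ∨ col v3 v5 = b)
    (c45 : col v4 v5 = a ∨ col v4 v5 = b) : False := by
  set v : Fin 6 → V := ![v0, v1, v2, v3, v4, v5] with hv
  have H : ∀ i j : Fin 6, i < j → v i ≠ v j := by
    intro i j hij
    fin_cases i <;> fin_cases j <;>
      first
        | exact absurd hij (by decide)
        | assumption
  have Hc : ∀ i j : Fin 6, i < j → col (v i) (v j) = a ∨ col (v i) (v j) = b := by
    intro i j hij
    fin_cases i <;> fin_cases j <;>
      first
        | exact absurd hij (by decide)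
        | assumption
  apply R33 h v ?_ a b ?_
  · intro i j hij
    rcases lt_or_gt_of_ne hij with hlt | hlt
    · exact H i j hlt
    · exact (H j i hlt).symm
  · intro i j hij
    rcases lt_or_gt_of_ne hij with hlt | hlt
    · exact Hc i j hlt
    · rw [h.symm]; exact Hc j i hlt

lemma buildP4 {col : V → V → Γ} (h : Gallai col) {S : Finset V}
    (B0 B1 B2 B3 : Finset V) (a b : Γ) (hab : a ≠ b)
    (h0 : B0.Nonempty) (h1 : B1.Nonempty) (h2 : B2.Nonempty) (h3 : B3.Nonempty)
    (d01 : Disjoint B0 B1) (d02 : Disjoint B0 B2) (d03 : Disjoint B0 B3)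
    (d12 : Disjoint B1 B2) (d13 : Disjoint B1 B3) (d23 : Disjoint B2 B3)
    (hun : B0 ∪ B1 ∪ B2 ∪ B3 = S)
    (e01 : ∀ u ∈ B0, ∀ v ∈ B1, col u v = a)
    (e12 : ∀ u ∈ B1, ∀ v ∈ B2, col u v = a)
    (e23 : ∀ u ∈ B2, ∀ v ∈ B3, col u v = a)
    (e02 : ∀ u ∈ B0, ∀ v ∈ B2, col u v = b)
    (e03 : ∀ u ∈ B0, ∀ v ∈ B3, col u v = b)
    (e13 : ∀ u ∈ B1, ∀ v ∈ B3, col u v = b) :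
    ShapeP patP4 col S := by
  refine ⟨![B0, B1, B2, B3], a, b, hab, ?_, ?_, ?_, ?_⟩
  · intro i; fin_cases i <;> simpa
  · intro i j hij
    fin_cases i <;> fin_cases j <;> simp_all <;>
      first
        | assumption
        | exact d01.symm | exact d02.symm | exact d03.symm
        | exact d12.symm | exact d13.symm | exact d23.symm
  · rw [← hun]; ext y
    constructor
    · intro hy
      obtain ⟨i, -, hi⟩ := Finset.mem_biUnion.mp hy
      simp only [Finset.mem_union]
      fin_cases i <;> simp at hi <;> tauto
    · intro hy
      rw [Finset.mem_biUnion]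
      simp only [Finset.mem_union] at hy
      rcases hy with ((hy | hy) | hy) | hy
      exacts [⟨0, Finset.mem_univ _, by simpa using hy⟩, ⟨1, Finset.mem_univ _, by simpa using hy⟩,
        ⟨2, Finset.mem_univ _, by simpa using hy⟩, ⟨3, Finset.mem_univ _, by simpa using hy⟩]
  · intro i j hij u hu v hv
    fin_cases i <;> fin_cases j <;> simp_all [patP4] <;>
      first
        | exact e01 u hu v hv | (rw [h.symm]; exact e01 v hv u hu)
        | exact e12 u hu v hv | (rw [h.symm]; exact e12 v hv u hu)
        | exact e23 u hu v hv | (rw [h.symm]; exact e23 v hv u hu)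
        | exact e02 u hu v hv | (rw [h.symm]; exact e02 v hv u hu)
        | exact e03 u hu v hv | (rw [h.symm]; exact e03 v hv u hu)
        | exact e13 u hu v hv | (rw [h.symm]; exact e13 v hv u hu)

lemma buildC5 {col : V → V → Γ} (h : Gallai col) {S : Finset V}
    (B0 B1 B2 B3 B4 : Finset V) (a b : Γ) (hab : a ≠ b)
    (h0 : B0.Nonempty) (h1 : B1.Nonempty) (h2 : B2.Nonempty) (h3 : B3.Nonempty) (h4 : B4.Nonempty)
    (d01 : Disjoint B0 B1) (d02 : Disjoint B0 B2) (d03 : Disjoint B0 B3) (d04 : Disjoint B0 B4)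
    (d12 : Disjoint B1 B2) (d13 : Disjoint B1 B3) (d14 : Disjoint B1 B4)
    (d23 : Disjoint B2 B3) (d24 : Disjoint B2 B4) (d34 : Disjoint B3 B4)
    (hun : B0 ∪ B1 ∪ B2 ∪ B3 ∪ B4 = S)
    (e01 : ∀ u ∈ B0, ∀ v ∈ B1, col u v = a)
    (e12 : ∀ u ∈ B1, ∀ v ∈ B2, col u v = a)
    (e23 : ∀ u ∈ B2, ∀ v ∈ B3, col u v = a)
    (e34 : ∀ u ∈ B3, ∀ v ∈ B4, col u v = a)
    (e04 : ∀ u ∈ B0, ∀ v ∈ B4, col u v = a)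
    (e02 : ∀ u ∈ B0, ∀ v ∈ B2, col u v = b)
    (e03 : ∀ u ∈ B0, ∀ v ∈ B3, col u v = b)
    (e13 : ∀ u ∈ B1, ∀ v ∈ B3, col u v = b)
    (e14 : ∀ u ∈ B1, ∀ v ∈ B4, col u v = b)
    (e24 : ∀ u ∈ B2, ∀ v ∈ B4, col u v = b) :
    ShapeP patC5 col S := by
  refine ⟨![B0, B1, B2, B3, B4], a, b, hab, ?_, ?_, ?_, ?_⟩
  · intro i; fin_cases i <;> simpa
  · intro i j hij
    fin_cases i <;> fin_cases j <;> simp_all <;>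
      first
        | assumption
        | exact d01.symm | exact d02.symm | exact d03.symm | exact d04.symm
        | exact d12.symm | exact d13.symm | exact d14.symm
        | exact d23.symm | exact d24.symm | exact d34.symm
  · rw [← hun]; ext y
    constructor
    · intro hy
      obtain ⟨i, -, hi⟩ := Finset.mem_biUnion.mp hy
      simp only [Finset.mem_union]
      fin_cases i <;> simp at hi <;> tauto
    · intro hy
      rw [Finset.mem_biUnion]
      simp only [Finset.mem_union] at hy
      rcases hy with (((hy | hy) | hy) | hy) | hy
      exacts [⟨0, Finset.mem_univ _, by simpa using hy⟩, ⟨1, Finset.mem_univ _, by simpa using hy⟩,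
        ⟨2, Finset.mem_univ _, by simpa using hy⟩, ⟨3, Finset.mem_univ _, by simpa using hy⟩,
        ⟨4, Finset.mem_univ _, by simpa using hy⟩]
  · intro i j hij u hu v hv
    fin_cases i <;> fin_cases j <;> simp_all [patC5] <;>
      first
        | exact e01 u hu v hv | (rw [h.symm]; exact e01 v hv u hu)
        | exact e12 u hu v hv | (rw [h.symm]; exact e12 v hv u hu)
        | exact e23 u hu v hv | (rw [h.symm]; exact e23 v hv u hu)
        | exact e34 u hu v hv | (rw [h.symm]; exact e34 v hv u hu)
        | exact e04 u hu v hv | (rw [h.symm]; exact e04 v hv u hu)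
        | exact e02 u hu v hv | (rw [h.symm]; exact e02 v hv u hu)
        | exact e03 u hu v hv | (rw [h.symm]; exact e03 v hv u hu)
        | exact e13 u hu v hv | (rw [h.symm]; exact e13 v hv u hu)
        | exact e14 u hu v hv | (rw [h.symm]; exact e14 v hv u hu)
        | exact e24 u hu v hv | (rw [h.symm]; exact e24 v hv u hu)

/-- Induction step when the smaller set has a 2-part partition. -/
lemma branchA {col : V → V → Γ} (h : Gallai col) {x : V} {S S' : Finset V}
    (hxS' : x ∉ S') (hins : insert x S' = S) (hA : ShapeA col S') : GP col S := by
  classical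
  obtain ⟨A, B, α, hAne, hBne, hdisj, hun, hcAB⟩ := hA
  have hAS' : A ⊆ S' := hun ▸ Finset.subset_union_left
  have hBS' : B ⊆ S' := hun ▸ Finset.subset_union_right
  have hAx : ∀ u ∈ A, x ≠ u := fun u hu hh => hxS' (hh ▸ hAS' hu)
  have hBx : ∀ v ∈ B, x ≠ v := fun v hv hh => hxS' (hh ▸ hBS' hv)
  have hABne : ∀ u ∈ A, ∀ v ∈ B, u ≠ v :=
    fun u hu v hv hh => (Finset.disjoint_left.mp hdisj hu) (hh ▸ hv)
  by_cases hWB : ∀ y ∈ B, col x y = α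
  · left
    refine ⟨insert x A, B, α, ⟨x, Finset.mem_insert_self x A⟩, hBne, ?_, ?_, ?_⟩
    · exact Finset.disjoint_insert_left.mpr ⟨fun hh => hBx x hh rfl, hdisj⟩
    · rw [Finset.insert_union, hun, hins]
    · intro u hu v hv
      rcases Finset.mem_insert.mp hu with rfl | hu
      · exact hWB v hv
      · exact hcAB u hu v hv
  by_cases hWA : ∀ u ∈ A, col x u = α
  · left
    refine ⟨A, insert x B, α, hAne, ⟨x, Finset.mem_insert_self x B⟩, ?_, ?_, ?_⟩
    · exact Finset.disjoint_insert_right.mpr ⟨fun hh => hAx x hh rfl, hdisj⟩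
    · rw [Finset.union_insert, hun, hins]
    · intro u hu v hv
      rcases Finset.mem_insert.mp hv with rfl | hv
      · rw [h.symm]; exact hWA u hu
      · exact hcAB u hu v hv
  push_neg at hWB hWA
  obtain ⟨y₀, hy₀B, hy₀⟩ := hWB
  obtain ⟨u₀, hu₀A, hu₀⟩ := hWA
  set q := col x y₀ with hqdef
  have hqα : q ≠ α := hy₀
  have hu₀q : col x u₀ = q := by
    rcases h.two x u₀ y₀ (hAx u₀ hu₀A) (hABne u₀ hu₀A y₀ hy₀B) (hBx y₀ hy₀B) with hh | hh | hh
    · exact absurd (hh.trans (hcAB u₀ hu₀A y₀ hy₀B)) hu₀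
    · exact absurd ((hcAB u₀ hu₀A y₀ hy₀B).symm.trans hh) (Ne.symm hqα)
    · exact hh
  have hcolA : ∀ u ∈ A, col x u = α ∨ col x u = q := by
    intro u hu
    exact h.pin (hAx u hu) (hABne u hu y₀ hy₀B) (hBx y₀ hy₀B)
      (hcAB u hu y₀ hy₀B) rfl (Ne.symm hqα)
  have hcolB : ∀ y ∈ B, col x y = α ∨ col x y = q := by
    intro y hy
    exact h.pin (hBx y hy) (Ne.symm (hABne u₀ hu₀A y hy)) (hAx u₀ hu₀A)
      ((h.symm u₀ y) ▸ hcAB u₀ hu₀A y hy) hu₀q (Ne.symm hqα)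
  set P : Finset V := A.filter (fun u => col x u = α) with hPdef
  set Q : Finset V := A.filter (fun u => col x u = q) with hQdef
  set P₂ : Finset V := B.filter (fun y => col x y = α) with hP₂def
  set Q₂ : Finset V := B.filter (fun y => col x y = q) with hQ₂def
  have hQne : Q.Nonempty := ⟨u₀, Finset.mem_filter.mpr ⟨hu₀A, hu₀q⟩⟩
  have hQ₂ne : Q₂.Nonempty := ⟨y₀, Finset.mem_filter.mpr ⟨hy₀B, rfl⟩⟩
  have hPQ : P ∪ Q = A := by
    ext u
    simp only [Finset.mem_union, Finset.mem_filter, hPdef, hQdef]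
    constructor
    · rintro (⟨hu, -⟩ | ⟨hu, -⟩) <;> exact hu
    · intro hu
      rcases hcolA u hu with hh | hh
      · exact Or.inl ⟨hu, hh⟩
      · exact Or.inr ⟨hu, hh⟩
  have hPQ₂ : P₂ ∪ Q₂ = B := by
    ext u
    simp only [Finset.mem_union, Finset.mem_filter, hP₂def, hQ₂def]
    constructor
    · rintro (⟨hu, -⟩ | ⟨hu, -⟩) <;> exact hu
    · intro hu
      rcases hcolB u hu with hh | hh
      · exact Or.inl ⟨hu, hh⟩
      · exact Or.inr ⟨hu, hh⟩
  have hkill : ¬ (P.Nonempty ∧ P₂.Nonempty) := by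
    rintro ⟨⟨u, hu⟩, ⟨y, hy⟩⟩
    obtain ⟨huA, huc⟩ := Finset.mem_filter.mp hu
    obtain ⟨hyB, hyc⟩ := Finset.mem_filter.mp hy
    exact h.mono3 (hAx u huA) (hABne u huA y hyB) (hBx y hyB) huc (hcAB u huA y hyB) hyc
  by_cases hPe : P = ∅
  · by_cases hP₂e : P₂ = ∅
    · -- x is monochromatic q to everything
      left
      refine ⟨{x}, S', q, Finset.singleton_nonempty x, ⟨u₀, hAS' hu₀A⟩, ?_, ?_, ?_⟩
      · exact Finset.disjoint_singleton_left.mpr hxS'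
      · rw [← Finset.insert_eq, hins]
      · intro u hu v hv
        rw [Finset.mem_singleton.mp hu]
        rcases Finset.mem_union.mp (hun ▸ hv : v ∈ A ∪ B) with hvA | hvB
        · rcases hcolA v hvA with hh | hh
          · exact absurd (Finset.mem_filter.mpr ⟨hvA, hh⟩)
              (Finset.eq_empty_iff_forall_notMem.mp hPe v)
          · exact hh
        · rcases hcolB v hvB with hh | hh
          · exact absurd (Finset.mem_filter.mpr ⟨hvB, hh⟩)
              (Finset.eq_empty_iff_forall_notMem.mp hP₂e v)
          · exact hh
    · -- P empty, P₂ nonempty : P4 shape (P₂, Q₂, {x}, A)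
      right; left
      have hP₂ne : P₂.Nonempty := Finset.nonempty_iff_ne_empty.mpr hP₂e
      have hAq : ∀ v ∈ A, col x v = q := by
        intro v hv
        rcases hcolA v hv with hh | hh
        · exact absurd (Finset.mem_filter.mpr ⟨hv, hh⟩)
            (Finset.eq_empty_iff_forall_notMem.mp hPe v)
        · exact hh
      have hedge : ∀ u ∈ P₂, ∀ v ∈ Q₂, col u v = q := by
        intro u hu v hv
        obtain ⟨huB, huc⟩ := Finset.mem_filter.mp hu
        obtain ⟨hvB, hvc⟩ := Finset.mem_filter.mp hv
        have huv : u ≠ v := by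
          intro hh; rw [hh, hvc] at huc; exact hqα huc
        have hnα : col u v ≠ α := by
          intro hh
          exact h.mono3 huv (Ne.symm (hABne u₀ hu₀A v hvB)) (Ne.symm (hABne u₀ hu₀A u huB)) hh
            ((h.symm v u₀) ▸ hcAB u₀ hu₀A v hvB) ((h.symm u u₀) ▸ hcAB u₀ hu₀A u huB)
        have hvx : col v x = q := (h.symm v x).trans hvc
        have hux : col u x = α := (h.symm u x).trans huc
        rcases h.pin huv (hBx v hvB).symm (hBx u huB).symm hvx hux hqα with hh | hh
        · exact hh
        · exact absurd hh hnα
      have hun4 : P₂ ∪ Q₂ ∪ {x} ∪ A = S := by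
        rw [hPQ₂, ← hins, ← hun]
        ext y
        simp only [Finset.mem_union, Finset.mem_singleton, Finset.mem_insert]
        tauto
      refine buildP4 h P₂ Q₂ {x} A q α hqα hP₂ne hQ₂ne (Finset.singleton_nonempty x) hAne
        ?_ ?_ ?_ ?_ ?_ ?_ hun4 hedge ?_ ?_ ?_ ?_ ?_
      · refine Finset.disjoint_left.mpr (fun u hu hu' => ?_)
        exact hqα (((Finset.mem_filter.mp hu').2).symm.trans ((Finset.mem_filter.mp hu).2))
      · exact Finset.disjoint_singleton_right.mpr
          (fun hh => hBx x (Finset.mem_filter.mp hh).1 rfl)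
      · exact Finset.disjoint_of_subset_left (Finset.filter_subset _ _) hdisj.symm
      · exact Finset.disjoint_singleton_right.mpr
          (fun hh => hBx x (Finset.mem_filter.mp hh).1 rfl)
      · exact Finset.disjoint_of_subset_left (Finset.filter_subset _ _) hdisj.symm
      · exact Finset.disjoint_singleton_left.mpr (fun hh => hAx x hh rfl)
      · intro u hu v hv
        rw [Finset.mem_singleton.mp hv]
        exact (h.symm u x).trans (Finset.mem_filter.mp hu).2
      · intro u hu v hv
        rw [Finset.mem_singleton.mp hu]
        exact hAq v hv
      · intro u hu v hv
        rw [Finset.mem_singleton.mp hv]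
        exact (h.symm u x).trans (Finset.mem_filter.mp hu).2
      · intro u hu v hv
        exact (h.symm u v).trans (hcAB v hv u (Finset.mem_filter.mp hu).1)
      · intro u hu v hv
        exact (h.symm u v).trans (hcAB v hv u (Finset.mem_filter.mp hu).1)
  · have hPne : P.Nonempty := Finset.nonempty_iff_ne_empty.mpr hPe
    have hP₂e : P₂ = ∅ := by
      by_contra hh
      exact hkill ⟨hPne, Finset.nonempty_iff_ne_empty.mpr hh⟩
    right; left
    have hBq : ∀ y ∈ B, col x y = q := by
      intro y hy
      rcases hcolB y hy with hh | hh
      · exact absurd (Finset.mem_filter.mpr ⟨hy, hh⟩)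
          (Finset.eq_empty_iff_forall_notMem.mp hP₂e y)
      · exact hh
    have hedge : ∀ u ∈ P, ∀ v ∈ Q, col u v = q := by
      intro u hu v hv
      obtain ⟨huA, huc⟩ := Finset.mem_filter.mp hu
      obtain ⟨hvA, hvc⟩ := Finset.mem_filter.mp hv
      have huv : u ≠ v := by
        intro hh; rw [hh, hvc] at huc; exact hqα huc
      have hnα : col u v ≠ α := by
        intro hh
        exact h.mono3 huv (hABne v hvA y₀ hy₀B) (hABne u huA y₀ hy₀B) hh
          (hcAB v hvA y₀ hy₀B) (hcAB u huA y₀ hy₀B)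
      have hvx : col v x = q := (h.symm v x).trans hvc
      have hux : col u x = α := (h.symm u x).trans huc
      rcases h.pin huv (hAx v hvA).symm (hAx u huA).symm hvx hux hqα with hh | hh
      · exact hh
      · exact absurd hh hnα
    have hun4 : P ∪ Q ∪ {x} ∪ B = S := by
      rw [hPQ, ← hins, ← hun]
      ext y
      simp only [Finset.mem_union, Finset.mem_singleton, Finset.mem_insert]
      tauto
    refine buildP4 h P Q {x} B q α hqα hPne hQne (Finset.singleton_nonempty x) hBne
      ?_ ?_ ?_ ?_ ?_ ?_ hun4 hedge ?_ ?_ ?_ ?_ ?_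
    · refine Finset.disjoint_left.mpr (fun u hu hu' => ?_)
      exact hqα (((Finset.mem_filter.mp hu').2).symm.trans ((Finset.mem_filter.mp hu).2))
    · exact Finset.disjoint_singleton_right.mpr
        (fun hh => hAx x (Finset.mem_filter.mp hh).1 rfl)
    · exact Finset.disjoint_of_subset_left (Finset.filter_subset _ _) hdisj
    · exact Finset.disjoint_singleton_right.mpr
        (fun hh => hAx x (Finset.mem_filter.mp hh).1 rfl)
    · exact Finset.disjoint_of_subset_left (Finset.filter_subset _ _) hdisj
    · exact Finset.disjoint_singleton_left.mpr (fun hh => hBx x hh rfl)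
    · intro u hu v hv
      rw [Finset.mem_singleton.mp hv]
      exact (h.symm u x).trans (Finset.mem_filter.mp hu).2
    · intro u hu v hv
      rw [Finset.mem_singleton.mp hu]
      exact hBq v hv
    · intro u hu v hv
      rw [Finset.mem_singleton.mp hv]
      exact (h.symm u x).trans (Finset.mem_filter.mp hu).2
    · intro u hu v hv
      exact hcAB u (Finset.mem_filter.mp hu).1 v hv
    · intro u hu v hv
      exact hcAB u (Finset.mem_filter.mp hu).1 v hv

/-- Extending a prime-shape partition by putting `x` into part `i`. -/
lemma extendPart {m : ℕ} {pat : Fin m → Fin m → Bool} (pfs : ∀ i j, pat i j = pat j i)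
    {col : V → V → Γ} (h : Gallai col) {x : V} {S S' : Finset V}
    (hxS' : x ∉ S') (hins : insert x S' = S)
    (P : Fin m → Finset V) (a b : Γ) (hab : a ≠ b) (hne : ∀ i, (P i).Nonempty)
    (hdisj : ∀ i j : Fin m, i ≠ j → Disjoint (P i) (P j))
    (hun : Finset.univ.biUnion P = S')
    (hcol : ∀ i j : Fin m, i ≠ j → ∀ u ∈ P i, ∀ v ∈ P j, col u v = if pat i j then a else b)
    (i : Fin m)
    (hW : ∀ j, j ≠ i → ∀ y ∈ P j, col x y = if pat j i then a else b) :
    ShapeP pat col S := by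
  classical
  have hPS' : ∀ j, P j ⊆ S' := fun j => hun ▸ Finset.subset_biUnion_of_mem P (Finset.mem_univ j)
  refine ⟨Function.update P i (insert x (P i)), a, b, hab, ?_, ?_, ?_, ?_⟩
  · intro j
    rcases eq_or_ne j i with rfl | hji
    · rw [Function.update_self]
      exact ⟨x, Finset.mem_insert_self _ _⟩
    · rw [Function.update_of_ne hji]; exact hne j
  · intro j l hjl
    rcases eq_or_ne j i with rfl | hji
    · have hli : l ≠ j := Ne.symm hjl
      rw [Function.update_self, Function.update_of_ne hli]
      exact Finset.disjoint_insert_left.mpr ⟨fun hh => hxS' (hPS' l hh), hdisj _ _ hjl⟩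
    · rw [Function.update_of_ne hji]
      rcases eq_or_ne l i with rfl | hli
      · rw [Function.update_self]
        exact Finset.disjoint_insert_right.mpr ⟨fun hh => hxS' (hPS' j hh), hdisj _ _ hjl⟩
      · rw [Function.update_of_ne hli]; exact hdisj _ _ hjl
  · rw [← hins, ← hun]
    ext y
    simp only [Finset.mem_biUnion, Finset.mem_univ, true_and, Finset.mem_insert]
    constructor
    · rintro ⟨j, hj⟩
      rcases eq_or_ne j i with rfl | hji
      · rw [Function.update_self] at hj
        rcases Finset.mem_insert.mp hj with rfl | hj
        · exact Or.inl rfl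
        · exact Or.inr ⟨j, hj⟩
      · rw [Function.update_of_ne hji] at hj
        exact Or.inr ⟨j, hj⟩
    · rintro (rfl | ⟨j, hj⟩)
      · exact ⟨i, by rw [Function.update_self]; exact Finset.mem_insert_self _ _⟩
      · rcases eq_or_ne j i with rfl | hji
        · exact ⟨j, by rw [Function.update_self]; exact Finset.mem_insert_of_mem hj⟩
        · exact ⟨j, by rw [Function.update_of_ne hji]; exact hj⟩
  · intro j l hjl p hp v hv
    rcases eq_or_ne j i with rfl | hji
    · have hli : l ≠ j := Ne.symm hjl
      rw [Function.update_self] at hp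
      rw [Function.update_of_ne hli] at hv
      rcases Finset.mem_insert.mp hp with rfl | hp
      · rw [pfs]
        exact hW l hli v hv
      · exact hcol j l hjl p hp v hv
    · rw [Function.update_of_ne hji] at hp
      rcases eq_or_ne l i with rfl | hli
      · rw [Function.update_self] at hv
        rcases Finset.mem_insert.mp hv with rfl | hv
        · rw [h.symm]
          exact hW j hji p hp
        · exact hcol j l hjl p hp v hv
      · rw [Function.update_of_ne hli] at hv
        exact hcol j l hjl p hp v hv

def AllMono {m : ℕ} (pat : Fin m → Fin m → Bool) (col : V → V → Γ) (x : V) (S' : Finset V) :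
    Prop :=
  ∃ (P : Fin m → Finset V) (a b : Γ), a ≠ b ∧ (∀ i, (P i).Nonempty) ∧
    (∀ i j : Fin m, i ≠ j → Disjoint (P i) (P j)) ∧ Finset.univ.biUnion P = S' ∧
    (∀ i j : Fin m, i ≠ j → ∀ u ∈ P i, ∀ v ∈ P j, col u v = if pat i j then a else b) ∧
    ∃ cs : Fin m → Γ, (∀ i, ∀ y ∈ P i, col x y = cs i) ∧ (∀ i, cs i = a ∨ cs i = b)

lemma branchP {m : ℕ} {pat : Fin m → Fin m → Bool} (pf : PatFacts pat)
    {col : V → V → Γ} (h : Gallai col) {x : V} {S S' : Finset V}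
    (hxS' : x ∉ S') (hins : insert x S' = S) (hP : ShapeP pat col S') :
    (ShapeP pat col S ∨ ShapeA col S) ∨ AllMono pat col x S' := by
  classical
  obtain ⟨P, a, b, hab, hne, hdisj, hun, hcol⟩ := hP
  have hPS' : ∀ i, P i ⊆ S' := fun i => hun ▸ Finset.subset_biUnion_of_mem P (Finset.mem_univ i)
  have hxP : ∀ i, ∀ y ∈ P i, x ≠ y := fun i y hy hh => hxS' (hh ▸ hPS' i hy)
  have hPne' : ∀ i j, i ≠ j → ∀ u ∈ P i, ∀ v ∈ P j, u ≠ v :=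
    fun i j hij u hu v hv hh => (Finset.disjoint_left.mp (hdisj i j hij) hu) (hh ▸ hv)
  have hccab : ∀ i j : Fin m, (if pat i j then a else b) = a ∨ (if pat i j then a else b) = b :=
    fun i j => by split; exacts [Or.inl rfl, Or.inr rfl]
  have hccsym : ∀ i j : Fin m, (if pat i j then a else b) = (if pat j i then a else b) :=
    fun i j => by rw [pf.symm]
  by_cases hsplit : ∃ i, ∃ u ∈ P i, ∃ u' ∈ P i, col x u ≠ col x u'
  · left
    obtain ⟨i, u, hu, u', hu', huu'⟩ := hsplit
    by_cases hW : ∀ j, j ≠ i → ∀ y ∈ P j, col x y = if pat j i then a else b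
    · exact Or.inl (extendPart pf.symm h hxS' hins P a b hab hne hdisj hun hcol i hW)
    exfalso
    push_neg at hW
    obtain ⟨l₀, hl₀i, y₀, hy₀, hqne⟩ := hW
    set q := col x y₀ with hqdef
    set p : Γ := if pat l₀ i then a else b with hpdef
    have hpq : p ≠ q := fun hh => hqne hh.symm
    have hpab : p = a ∨ p = b := hpdef ▸ hccab l₀ i
    have hBi : ∀ v ∈ P i, col x v = p ∨ col x v = q := by
      intro v hv
      have hvy : col v y₀ = p :=
        (hcol i l₀ (Ne.symm hl₀i) v hv y₀ hy₀).trans (hpdef ▸ hccsym i l₀)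
      exact h.pin (hxP i v hv) (hPne' i l₀ (Ne.symm hl₀i) v hv y₀ hy₀) (hxP l₀ y₀ hy₀)
        hvy rfl hpq
    obtain ⟨up, hupP, hupc⟩ : ∃ up ∈ P i, col x up = p := by
      rcases hBi u hu with hh | hh
      · exact ⟨u, hu, hh⟩
      rcases hBi u' hu' with hh' | hh'
      · exact ⟨u', hu', hh'⟩
      · exact absurd (hh.trans hh'.symm) huu'
    obtain ⟨uq, huqP, huqc⟩ : ∃ uq ∈ P i, col x uq = q := by
      rcases hBi u hu with hh | hh
      · rcases hBi u' hu' with hh' | hh'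
        · exact absurd (hh.trans hh'.symm) huu'
        · exact ⟨u', hu', hh'⟩
      · exact ⟨u, hu, hh⟩
    have hallq : ∀ j, j ≠ i → (if pat j i then a else b) = p → ∀ y ∈ P j, col x y = q := by
      intro j hji hcc y hy
      have hyuq : col y uq = p := (hcol j i hji y hy uq huqP).trans hcc
      rcases h.pin (hxP j y hy) (hPne' j i hji y hy uq huqP) (hxP i uq huqP) hyuq huqc hpq
        with hh | hh
      · exfalso
        have hupy : col up y = p :=
          (hcol i j (Ne.symm hji) up hupP y hy).trans ((hccsym i j).trans hcc)
        exact h.mono3 (hxP i up hupP) (hPne' i j (Ne.symm hji) up hupP y hy) (hxP j y hy)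
          hupc hupy hh
      · exact hh
    by_cases hqab : q = a ∨ q = b
    · -- Ramsey kill
      have hout : ∀ j, j ≠ i → ∀ y ∈ P j, col x y = a ∨ col x y = b := by
        intro j hji y hy
        by_cases hcc : (if pat j i then a else b) = p
        · rw [hallq j hji hcc y hy]; exact hqab
        · have hy_up : col y up = if pat j i then a else b := hcol j i hji y hy up hupP
          rcases h.pin (hxP j y hy) (hPne' j i hji y hy up hupP) (hxP i up hupP) hy_up hupc hcc
            with hh | hh
          · rw [hh]; exact hccab j i
          · rw [hh]; exact hpab
      obtain ⟨j1, j2, j3, hj1, hj2, hj3, h12, h13, h23⟩ := pf.others3 i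
      obtain ⟨w1, hw1⟩ := hne j1
      obtain ⟨w2, hw2⟩ := hne j2
      obtain ⟨w3, hw3⟩ := hne j3
      have hupq : up ≠ uq := fun hh => hpq (((hh ▸ hupc) : col x uq = p).symm.trans huqc)
      have hpqedge : col up uq = a ∨ col up uq = b := by
        have hx1 : col uq x = q := (h.symm uq x).trans huqc
        have hx2 : col up x = p := (h.symm up x).trans hupc
        rcases h.pin hupq (hxP i uq huqP).symm (hxP i up hupP).symm hx1 hx2 (Ne.symm hpq)
          with hh | hh
        · rw [hh]; exact hqab
        · rw [hh]; exact hpab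
      refine R33' h x up uq w1 w2 w3 a b
        (hxP i up hupP) (hxP i uq huqP) (hxP j1 w1 hw1) (hxP j2 w2 hw2) (hxP j3 w3 hw3)
        hupq (hPne' i j1 (Ne.symm hj1) up hupP w1 hw1) (hPne' i j2 (Ne.symm hj2) up hupP w2 hw2)
        (hPne' i j3 (Ne.symm hj3) up hupP w3 hw3)
        (hPne' i j1 (Ne.symm hj1) uq huqP w1 hw1) (hPne' i j2 (Ne.symm hj2) uq huqP w2 hw2)
        (hPne' i j3 (Ne.symm hj3) uq huqP w3 hw3)
        (hPne' j1 j2 h12 w1 hw1 w2 hw2) (hPne' j1 j3 h13 w1 hw1 w3 hw3)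
        (hPne' j2 j3 h23 w2 hw2 w3 hw3)
        (by rw [hupc]; exact hpab) (by rw [huqc]; exact hqab)
        (hout j1 hj1 w1 hw1) (hout j2 hj2 w2 hw2) (hout j3 hj3 w3 hw3)
        hpqedge
        (by rw [hcol i j1 (Ne.symm hj1) up hupP w1 hw1]; exact hccab i j1)
        (by rw [hcol i j2 (Ne.symm hj2) up hupP w2 hw2]; exact hccab i j2)
        (by rw [hcol i j3 (Ne.symm hj3) up hupP w3 hw3]; exact hccab i j3)
        (by rw [hcol i j1 (Ne.symm hj1) uq huqP w1 hw1]; exact hccab i j1)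
        (by rw [hcol i j2 (Ne.symm hj2) uq huqP w2 hw2]; exact hccab i j2)
        (by rw [hcol i j3 (Ne.symm hj3) uq huqP w3 hw3]; exact hccab i j3)
        (by rw [hcol j1 j2 h12 w1 hw1 w2 hw2]; exact hccab j1 j2)
        (by rw [hcol j1 j3 h13 w1 hw1 w3 hw3]; exact hccab j1 j3)
        (by rw [hcol j2 j3 h23 w2 hw2 w3 hw3]; exact hccab j2 j3)
    · -- rainbow kill
      push_neg at hqab
      obtain ⟨hqa, hqb⟩ := hqab
      obtain ⟨l, l', hli, hl'i, hll', hpatl, hpatl', hpatll'⟩ := pf.kill (pat l₀ i) i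
      have hccl : (if pat l i then a else b) = p := by rw [hpatl, hpdef]
      have hccl'ne : (if pat l' i then a else b) ≠ p := by
        rw [hpatl', hpdef]
        cases pat l₀ i <;> simp [hab, Ne.symm hab]
      have hccll' : (if pat l l' then a else b) = p := by rw [hpatll', hpdef]
      obtain ⟨y, hy⟩ := hne l
      obtain ⟨w, hw⟩ := hne l'
      have hxy : col x y = q := hallq l hli hccl y hy
      have hl'q : (if pat l' i then a else b) ≠ q := by
        rcases hccab l' i with hh | hh <;> rw [hh]
        · exact Ne.symm hqa
        · exact Ne.symm hqb
      have hxw : col x w = if pat l' i then a else b := by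
        have h1 : col w up = if pat l' i then a else b := hcol l' i hl'i w hw up hupP
        have h2 : col w uq = if pat l' i then a else b := hcol l' i hl'i w hw uq huqP
        rcases h.pin (hxP l' w hw) (hPne' l' i hl'i w hw up hupP) (hxP i up hupP) h1 hupc
          hccl'ne with hh | hh
        · exact hh
        · exfalso
          rcases h.pin (hxP l' w hw) (hPne' l' i hl'i w hw uq huqP) (hxP i uq huqP) h2 huqc
            hl'q with hh' | hh'
          · exact hccl'ne (hh.symm.trans hh').symm
          · exact hpq (hh.symm.trans hh')
      have hyw : col y w = p := (hcol l l' hll' y hy w hw).trans hccll'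
      rcases h.two x y w (hxP l y hy) (hPne' l l' hll' y hy w hw) (hxP l' w hw) with hh | hh | hh
      · exact hpq (((hxy ▸ hh : q = col y w).trans hyw)).symm
      · exact hccl'ne (((hyw ▸ hh : p = col x w).trans hxw)).symm
      · rcases hccab l' i with h' | h'
        · exact hqa ((hxy ▸ hh : q = col x w).trans (hxw.trans h'))
        · exact hqb ((hxy ▸ hh : q = col x w).trans (hxw.trans h'))
  · -- x is monochromatic on every part
    push_neg at hsplit
    set cs : Fin m → Γ := fun i => col x (hne i).choose with hcsdef
    have hcs : ∀ i, ∀ y ∈ P i, col x y = cs i :=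
      fun i y hy => hsplit i y hy _ (hne i).choose_spec
    by_cases hγ : ∀ i, cs i = a ∨ cs i = b
    · exact Or.inr ⟨P, a, b, hab, hne, hdisj, hun, hcol, cs, hcs, hγ⟩
    left
    push_neg at hγ
    obtain ⟨i₀, hγa, hγb⟩ := hγ
    set T : Finset (Fin m) := Finset.univ.filter (fun i => cs i = cs i₀) with hTdef
    have hi₀T : i₀ ∈ T := Finset.mem_filter.mpr ⟨Finset.mem_univ _, rfl⟩
    have hTfact : ∀ l, l ∉ T → ∀ j, j ∈ T → cs l = if pat j l then a else b := by
      intro l hl j hj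
      have hcsj : cs j = cs i₀ := (Finset.mem_filter.mp hj).2
      have hcsl : cs l ≠ cs i₀ := fun hh => hl (Finset.mem_filter.mpr ⟨Finset.mem_univ _, hh⟩)
      have hjl : j ≠ l := fun hh => hcsl (hh ▸ hcsj)
      obtain ⟨yj, hyj⟩ := hne j
      obtain ⟨yl, hyl⟩ := hne l
      have e1 : col x yj = cs i₀ := (hcs j yj hyj).trans hcsj
      have e2 : col x yl = cs l := hcs l yl hyl
      have e3 : col yj yl = if pat j l then a else b := hcol j l hjl yj hyj yl hyl
      rcases h.two x yj yl (hxP j yj hyj) (hPne' j l hjl yj hyj yl hyl) (hxP l yl hyl)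
        with hh | hh | hh
      · -- cs i₀ = cc j l : impossible since cs i₀ ∉ {a,b}
        exfalso
        rcases hccab j l with h' | h'
        · exact hγa ((e1 ▸ hh : cs i₀ = col yj yl).trans (e3.trans h'))
        · exact hγb ((e1 ▸ hh : cs i₀ = col yj yl).trans (e3.trans h'))
      · exact ((e2 ▸ hh : col yj yl = cs l).symm.trans e3)
      · exact absurd ((e1 ▸ hh : cs i₀ = col x yl).trans e2).symm hcsl
    have hTpat : ∀ l ∉ T, ∀ j ∈ T, ∀ j' ∈ T, pat j l = pat j' l := by
      intro l hl j hj j' hj'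
      have e1 := hTfact l hl j hj
      have e2 := hTfact l hl j' hj'
      exact (ite_ne hab _ _).mp (e1.symm.trans e2)
    rcases pf.prime T hTpat with hT1 | hTuniv
    · -- extension at i₀
      left
      refine extendPart pf.symm h hxS' hins P a b hab hne hdisj hun hcol i₀ ?_
      intro j hj y hy
      have hjT : j ∉ T := by
        intro hh
        exact hj (Finset.card_le_one.mp hT1 j hh i₀ hi₀T)
      rw [hcs j y hy, hccsym j i₀]
      exact hTfact j hjT i₀ hi₀T
    · -- x monochromatic to everything : ShapeA
      right
      obtain ⟨y₀', hy₀'⟩ := hne i₀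
      refine ⟨{x}, S', cs i₀, Finset.singleton_nonempty x, ⟨y₀', hPS' i₀ hy₀'⟩, ?_, ?_, ?_⟩
      · exact Finset.disjoint_singleton_left.mpr hxS'
      · rw [← Finset.insert_eq, hins]
      · intro u hu v hv
        rw [Finset.mem_singleton.mp hu]
        obtain ⟨j, -, hj⟩ := Finset.mem_biUnion.mp (hun ▸ hv : v ∈ Finset.univ.biUnion P)
        have hjT : j ∈ T := hTuniv ▸ Finset.mem_univ j
        rw [hcs j v hj]
        exact (Finset.mem_filter.mp hjT).2

lemma patP4_unique : ∀ cb : Fin 4 → Bool,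
    (∀ i j, i ≠ j → ¬(cb i = cb j ∧ cb i = patP4 i j)) →
    cb 0 = true ∧ cb 1 = false ∧ cb 2 = false ∧ cb 3 = true := by decide

lemma patC5_none : ∀ cb : Fin 5 → Bool,
    (∀ i j, i ≠ j → ¬(cb i = cb j ∧ cb i = patC5 i j)) → False := by decide

/-- From AllMono data, extract the boolean incidence constraints. -/
lemma allMono_cb {m : ℕ} {pat : Fin m → Fin m → Bool} {col : V → V → Γ} (h : Gallai col)
    {x : V} {S' : Finset V} (hxS' : x ∉ S') (ham : AllMono pat col x S') :
    ∃ (P : Fin m → Finset V) (a b : Γ) (cs : Fin m → Γ),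
      a ≠ b ∧ (∀ i, (P i).Nonempty) ∧ (∀ i j : Fin m, i ≠ j → Disjoint (P i) (P j)) ∧
      Finset.univ.biUnion P = S' ∧
      (∀ i j : Fin m, i ≠ j → ∀ u ∈ P i, ∀ v ∈ P j, col u v = if pat i j then a else b) ∧
      (∀ i, ∀ y ∈ P i, col x y = cs i) ∧
      (∀ i, cs i = a ∨ cs i = b) ∧
      (∀ i j, i ≠ j →
        ¬((decide (cs i = a) = decide (cs j = a)) ∧ decide (cs i = a) = pat i j)) := by
  classical
  obtain ⟨P, a, b, hab, hne, hdisj, hun, hcol, cs, hcs, hcsab⟩ := ham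
  have hPS' : ∀ i, P i ⊆ S' := fun i => hun ▸ Finset.subset_biUnion_of_mem P (Finset.mem_univ i)
  have hxP : ∀ i, ∀ y ∈ P i, x ≠ y := fun i y hy hh => hxS' (hh ▸ hPS' i hy)
  have hPne' : ∀ i j, i ≠ j → ∀ u ∈ P i, ∀ v ∈ P j, u ≠ v :=
    fun i j hij u hu v hv hh => (Finset.disjoint_left.mp (hdisj i j hij) hu) (hh ▸ hv)
  refine ⟨P, a, b, cs, hab, hne, hdisj, hun, hcol, hcs, hcsab, ?_⟩
  rintro i j hij ⟨h1, h2⟩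
  obtain ⟨yi, hyi⟩ := hne i
  obtain ⟨yj, hyj⟩ := hne j
  have hcsij : cs i = cs j := eq_of_two hab (hcsab i) (hcsab j) (decide_eq_decide.mp h1)
  have hcc : cs i = if pat i j then a else b := by
    cases hp : pat i j
    · rw [hp] at h2
      have hnota : ¬ (cs i = a) := of_decide_eq_false h2
      rcases hcsab i with hh | hh
      · exact absurd hh hnota
      · simpa using hh
    · rw [hp] at h2
      have ha : cs i = a := of_decide_eq_true h2
      simpa using ha
  exact h.mono3 (hxP i yi hyi) (hPne' i j hij yi hyi yj hyj) (hxP j yj hyj)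
    (hcs i yi hyi) ((hcol i j hij yi hyi yj hyj).trans hcc.symm)
    ((hcs j yj hyj).trans hcsij.symm)

lemma handleC5 {col : V → V → Γ} (h : Gallai col) {x : V} {S' : Finset V}
    (hxS' : x ∉ S') : ¬ AllMono patC5 col x S' := by
  intro ham
  obtain ⟨P, a, b, cs, hab, hne, hdisj, hun, hcol, hcs, hcsab, hcb⟩ := allMono_cb h hxS' ham
  exact patC5_none (fun i => decide (cs i = a)) hcb

lemma handleP4 {col : V → V → Γ} (h : Gallai col) {x : V} {S S' : Finset V}
    (hxS' : x ∉ S') (hins : insert x S' = S) (ham : AllMono patP4 col x S') :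
    GP col S := by
  right; right
  obtain ⟨P, a, b, cs, hab, hne, hdisj, hun, hcol, hcs, hcsab, hcb⟩ := allMono_cb h hxS' ham
  obtain ⟨hb0, hb1, hb2, hb3⟩ := patP4_unique (fun i => decide (cs i = a)) hcb
  have hcs0 : cs 0 = a := of_decide_eq_true hb0
  have hcs3 : cs 3 = a := of_decide_eq_true hb3
  have hcs1 : cs 1 = b := by
    rcases hcsab 1 with hh | hh
    · exact absurd hh (of_decide_eq_false hb1)
    · exact hh
  have hcs2 : cs 2 = b := by
    rcases hcsab 2 with hh | hh
    · exact absurd hh (of_decide_eq_false hb2)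
    · exact hh
  have hPS' : ∀ i, P i ⊆ S' := fun i => hun ▸ Finset.subset_biUnion_of_mem P (Finset.mem_univ i)
  have hxP : ∀ i, ∀ y ∈ P i, x ≠ y := fun i y hy hh => hxS' (hh ▸ hPS' i hy)
  have hU : {x} ∪ P 0 ∪ P 1 ∪ P 2 ∪ P 3 = S := by
    rw [← hins, ← hun]
    ext y
    simp only [Finset.mem_union, Finset.mem_singleton, Finset.mem_insert, Finset.mem_biUnion,
      Finset.mem_univ, true_and]
    constructor
    · rintro ((((rfl | hy) | hy) | hy) | hy)
      · exact Or.inl rfl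
      exacts [Or.inr ⟨0, hy⟩, Or.inr ⟨1, hy⟩, Or.inr ⟨2, hy⟩, Or.inr ⟨3, hy⟩]
    · rintro (rfl | ⟨i, hi⟩)
      · exact Or.inl (Or.inl (Or.inl (Or.inl rfl)))
      · fin_cases i
        exacts [Or.inl (Or.inl (Or.inl (Or.inr hi))), Or.inl (Or.inl (Or.inr hi)),
          Or.inl (Or.inr hi), Or.inr hi]
  have hedge : ∀ (i j : Fin 4), i ≠ j → (patP4 i j = true) →
      ∀ u ∈ P i, ∀ v ∈ P j, col u v = a := by
    intro i j hij hp u hu v hv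
    rw [hcol i j hij u hu v hv, hp]
    simp
  have hedgeb : ∀ (i j : Fin 4), i ≠ j → (patP4 i j = false) →
      ∀ u ∈ P i, ∀ v ∈ P j, col u v = b := by
    intro i j hij hp u hu v hv
    rw [hcol i j hij u hu v hv, hp]
    simp
  have hdx : ∀ i : Fin 4, Disjoint ({x} : Finset V) (P i) :=
    fun i => Finset.disjoint_singleton_left.mpr (fun hh => hxP i x hh rfl)
  refine buildC5 h {x} (P 0) (P 1) (P 2) (P 3) a b hab
    (Finset.singleton_nonempty x) (hne 0) (hne 1) (hne 2) (hne 3)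
    (hdx 0) (hdx 1) (hdx 2) (hdx 3)
    (hdisj 0 1 (by decide)) (hdisj 0 2 (by decide)) (hdisj 0 3 (by decide))
    (hdisj 1 2 (by decide)) (hdisj 1 3 (by decide)) (hdisj 2 3 (by decide))
    hU ?_ ?_ ?_ ?_ ?_ ?_ ?_ ?_ ?_ ?_
  · intro u hu v hv
    rw [Finset.mem_singleton.mp hu, hcs 0 v hv]
    exact hcs0
  · exact hedge 0 1 (by decide) (by decide)
  · exact hedge 1 2 (by decide) (by decide)
  · exact hedge 2 3 (by decide) (by decide)
  · intro u hu v hv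
    rw [Finset.mem_singleton.mp hu, hcs 3 v hv]
    exact hcs3
  · intro u hu v hv
    rw [Finset.mem_singleton.mp hu, hcs 1 v hv]
    exact hcs1
  · intro u hu v hv
    rw [Finset.mem_singleton.mp hu, hcs 2 v hv]
    exact hcs2
  · exact hedgeb 0 2 (by decide) (by decide)
  · exact hedgeb 0 3 (by decide) (by decide)
  · exact hedgeb 1 3 (by decide) (by decide)

/-! ### The structure theorem (to be proven) -/

theorem gplus (col : V → V → Γ) (h : Gallai col) :
    ∀ S : Finset V, 2 ≤ S.card → GP col S := by
  classical
  suffices H : ∀ n (S : Finset V), S.card ≤ n → 2 ≤ S.card → GP col S by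
    exact fun S hS => H S.card S le_rfl hS
  intro n
  induction n with
  | zero => intro S h1 h2; omega
  | succ n ih =>
    intro S hSn hS2
    have hpos : 0 < S.card := by omega
    obtain ⟨x, hx⟩ := Finset.card_pos.mp hpos
    set S' := S.erase x with hS'def
    have hxS' : x ∉ S' := Finset.notMem_erase x S
    have hins : insert x S' = S := Finset.insert_erase hx
    have hcard' : S'.card + 1 = S.card := Finset.card_erase_add_one hx
    by_cases hone : S'.card = 1
    · obtain ⟨y, hy⟩ := Finset.card_eq_one.mp hone
      have hxy : x ∉ ({y} : Finset V) := hy ▸ hxS'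
      have hyx : y ≠ x := fun hh => hxy (by rw [hh]; exact Finset.mem_singleton_self x)
      left
      refine ⟨{y}, {x}, col y x, Finset.singleton_nonempty y, Finset.singleton_nonempty x,
        ?_, ?_, ?_⟩
      · exact Finset.disjoint_singleton.mpr hyx
      · rw [← hins, hy]
        ext z
        simp only [Finset.mem_union, Finset.mem_singleton, Finset.mem_insert]
        tauto
      · intro u hu v hv
        rw [Finset.mem_singleton.mp hu, Finset.mem_singleton.mp hv]
    · have h2' : 2 ≤ S'.card := by omega
      rcases ih S' (by omega) h2' with hA | hPm | hPm
      · exact branchA h hxS' hins hA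
      · rcases branchP patP4_facts h hxS' hins hPm with (hP | hA) | ham
        · exact Or.inr (Or.inl hP)
        · exact Or.inl hA
        · exact handleP4 h hxS' hins ham
      · rcases branchP patC5_facts h hxS' hins hPm with (hP | hA) | ham
        · exact Or.inr (Or.inr hP)
        · exact Or.inl hA
        · exact absurd ham (handleC5 h hxS')

/-! ### Construction for the lower bound -/

def crossB (i j : Fin 5) : Bool := ((i.val + 1) % 5 == j.val) || ((j.val + 1) % 5 == i.val)

lemma crossB_symm : ∀ i j, crossB i j = crossB j i := by decide

lemma crossB_tri : ∀ i j l : Fin 5, i ≠ j → j ≠ l → i ≠ l →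
    ((crossB i j = crossB j l ∨ crossB j l = crossB i l ∨ crossB i j = crossB i l) ∧
     ¬(crossB i j = crossB j l ∧ crossB i j = crossB i l)) := by decide

def Good (k N : ℕ) (col : Fin N → Fin N → ℕ) : Prop :=
  (∀ u v, col u v = col v u) ∧
  (∀ u v w : Fin N, u ≠ v → v ≠ w → u ≠ w →
      ((col u v = col v w ∨ col v w = col u w ∨ col u v = col u w) ∧
       ¬(col u v = col v w ∧ col u v = col u w))) ∧
  Finset.univ.offDiag.image (fun p => col p.1 p.2) = Finset.range k

lemma good1 : Good 1 2 (fun _ _ => 0) := by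
  refine ⟨fun _ _ => rfl, by decide, by decide⟩

lemma good2 : Good 2 5 (fun i j => if crossB i j then 0 else 1) := by
  refine ⟨by decide, by decide, by decide⟩

lemma lift_ite {k : ℕ} (p q : Bool) :
    ((if p then k else k + 1) = (if q then k else k + 1)) ↔ p = q := by
  cases p <;> cases q <;> simp

lemma good_step {k N : ℕ} (hN : 1 ≤ N) (col : Fin N → Fin N → ℕ)
    (hg : Good k N col) : ∃ col' : Fin (5 * N) → Fin (5 * N) → ℕ, Good (k + 2) (5 * N) col' := by
  classical
  obtain ⟨hsym, htri, himg⟩ := hg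
  have hlt : ∀ u v : Fin N, u ≠ v → col u v < k := by
    intro u v huv
    have : col u v ∈ Finset.range k := by
      rw [← himg]
      exact Finset.mem_image.mpr ⟨(u, v),
        Finset.mem_offDiag.mpr ⟨Finset.mem_univ _, Finset.mem_univ _, huv⟩, rfl⟩
    exact Finset.mem_range.mp this
  have hsurj : ∀ c, c < k → ∃ u v : Fin N, u ≠ v ∧ col u v = c := by
    intro c hc
    have : c ∈ Finset.univ.offDiag.image (fun p : Fin N × Fin N => col p.1 p.2) := by
      rw [himg]; exact Finset.mem_range.mpr hc
    obtain ⟨p, hp, hpc⟩ := Finset.mem_image.mp this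
    obtain ⟨_, _, hne⟩ := Finset.mem_offDiag.mp hp
    exact ⟨p.1, p.2, hne, hpc⟩
  let e : Fin N × Fin 5 ≃ Fin (5 * N) := finProdFinEquiv.trans (finCongr (by ring))
  let col2 : Fin N × Fin 5 → Fin N × Fin 5 → ℕ := fun x y =>
    if x.2 = y.2 then col x.1 y.1 else (if crossB x.2 y.2 then k else k + 1)
  refine ⟨fun a b => col2 (e.symm a) (e.symm b), ?_, ?_, ?_⟩
  · intro a b
    show col2 _ _ = col2 _ _
    unfold col2
    by_cases hf : (e.symm a).2 = (e.symm b).2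
    · rw [if_pos hf, if_pos hf.symm, hsym]
    · have h2 : ¬ (e.symm b).2 = (e.symm a).2 := fun hh => hf hh.symm
      rw [if_neg hf, if_neg h2, crossB_symm]
  · intro a b c hab hbc hac
    have hxy : e.symm a ≠ e.symm b := fun hh => hab (e.symm.injective hh)
    have hyz : e.symm b ≠ e.symm c := fun hh => hbc (e.symm.injective hh)
    have hxz : e.symm a ≠ e.symm c := fun hh => hac (e.symm.injective hh)
    set x := e.symm a with hx
    set y := e.symm b with hy
    set z := e.symm c with hz
    show ((col2 x y = col2 y z ∨ col2 y z = col2 x z ∨ col2 x y = col2 x z) ∧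
       ¬(col2 x y = col2 y z ∧ col2 x y = col2 x z))
    unfold col2
    have hcross_ge : ∀ (p : Bool), k ≤ (if p then k else k + 1) := by
      intro p; cases p <;> simp
    by_cases h1 : x.2 = y.2 <;> by_cases h2 : y.2 = z.2
    · -- all in same fiber
      have h3 : x.2 = z.2 := h1.trans h2
      have hxy1 : x.1 ≠ y.1 := fun hh => hxy (Prod.ext hh h1)
      have hyz1 : y.1 ≠ z.1 := fun hh => hyz (Prod.ext hh h2)
      have hxz1 : x.1 ≠ z.1 := fun hh => hxz (Prod.ext hh h3)
      rw [if_pos h1, if_pos h2, if_pos h3]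
      exact htri x.1 y.1 z.1 hxy1 hyz1 hxz1
    · -- x,y same fiber, z different
      have h3 : ¬ x.2 = z.2 := fun hh => h2 (h1.symm.trans hh)
      have hxy1 : x.1 ≠ y.1 := fun hh => hxy (Prod.ext hh h1)
      rw [if_pos h1, if_neg h2, if_neg h3, h1]
      constructor
      · exact Or.inr (Or.inl rfl)
      · rintro ⟨hm, -⟩
        have := hlt x.1 y.1 hxy1
        have := hcross_ge (crossB y.2 z.2)
        omega
    · -- y,z same fiber, x different
      have h3 : ¬ x.2 = z.2 := fun hh => h1 (hh.trans h2.symm)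
      have hyz1 : y.1 ≠ z.1 := fun hh => hyz (Prod.ext hh h2)
      rw [if_neg h1, if_pos h2, if_neg h3, h2]
      constructor
      · exact Or.inr (Or.inr rfl)
      · rintro ⟨hm, -⟩
        have := hlt y.1 z.1 hyz1
        have := hcross_ge (crossB x.2 z.2)
        omega
    · by_cases h3 : x.2 = z.2
      · -- x,z same fiber, y different
        have hxz1 : x.1 ≠ z.1 := fun hh => hxz (Prod.ext hh h3)
        rw [if_neg h1, if_neg h2, if_pos h3]
        have hcc : crossB x.2 y.2 = crossB y.2 z.2 := by rw [h3, crossB_symm]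
        constructor
        · exact Or.inl (by rw [hcc])
        · rintro ⟨-, hm⟩
          have := hlt x.1 z.1 hxz1
          have := hcross_ge (crossB x.2 y.2)
          omega
      · -- all fibers distinct
        rw [if_neg h1, if_neg h2, if_neg h3]
        obtain ⟨ht2, htm⟩ := crossB_tri x.2 y.2 z.2 h1 h2 h3
        constructor
        · rcases ht2 with hh | hh | hh
          · exact Or.inl ((lift_ite _ _).mpr hh)
          · exact Or.inr (Or.inl ((lift_ite _ _).mpr hh))
          · exact Or.inr (Or.inr ((lift_ite _ _).mpr hh))
        · rintro ⟨hm1, hm2⟩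
          exact htm ⟨(lift_ite _ _).mp hm1, (lift_ite _ _).mp hm2⟩
  · -- image is exactly range (k+2)
    apply Finset.Subset.antisymm
    · intro c hc
      obtain ⟨p, hp, rfl⟩ := Finset.mem_image.mp hc
      obtain ⟨-, -, hne⟩ := Finset.mem_offDiag.mp hp
      show col2 _ _ ∈ _
      unfold col2
      refine Finset.mem_range.mpr ?_
      have hxy : e.symm p.1 ≠ e.symm p.2 := fun hh => hne (e.symm.injective hh)
      by_cases h1 : (e.symm p.1).2 = (e.symm p.2).2
      · rw [if_pos h1]
        have : (e.symm p.1).1 ≠ (e.symm p.2).1 := fun hh => hxy (Prod.ext hh h1)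
        have := hlt _ _ this
        omega
      · rw [if_neg h1]
        split <;> omega
    · intro c hc
      have hc2 := Finset.mem_range.mp hc
      refine Finset.mem_image.mpr ?_
      by_cases hck : c < k
      · obtain ⟨u, v, huv, hcol⟩ := hsurj c hck
        refine ⟨(e (u, 0), e (v, 0)), Finset.mem_offDiag.mpr ⟨Finset.mem_univ _, Finset.mem_univ _,
          fun hh => huv (by simpa using congrArg (fun t => (e.symm t).1) hh)⟩, ?_⟩
        show col2 (e.symm (e (u, 0))) (e.symm (e (v, 0))) = c
        rw [Equiv.symm_apply_apply, Equiv.symm_apply_apply]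
        unfold col2
        dsimp only
        simpa using hcol
      · obtain ⟨u, hu⟩ : ∃ u : Fin N, True := ⟨⟨0, hN⟩, trivial⟩
        by_cases hck2 : c = k
        · refine ⟨(e (u, 0), e (u, 1)), Finset.mem_offDiag.mpr ⟨Finset.mem_univ _, Finset.mem_univ _,
            fun hh => by simpa using congrArg (fun t => (e.symm t).2) hh⟩, ?_⟩
          show col2 (e.symm (e (u, 0))) (e.symm (e (u, 1))) = c
          rw [Equiv.symm_apply_apply, Equiv.symm_apply_apply]
          unfold col2
          dsimp only
          rw [if_neg (by decide : ¬((0 : Fin 5) = 1)), if_pos (by decide : crossB 0 1 = true)]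
          omega
        · have hck3 : c = k + 1 := by omega
          refine ⟨(e (u, 0), e (u, 2)), Finset.mem_offDiag.mpr ⟨Finset.mem_univ _, Finset.mem_univ _,
            fun hh => by simpa using congrArg (fun t => (e.symm t).2) hh⟩, ?_⟩
          show col2 (e.symm (e (u, 0))) (e.symm (e (u, 2))) = c
          rw [Equiv.symm_apply_apply, Equiv.symm_apply_apply]
          unfold col2
          dsimp only
          rw [if_neg (by decide : ¬((0 : Fin 5) = 2)), if_neg (by decide : ¬(crossB 0 2 = true))]
          omega

lemma F_ge_two {k : ℕ} (hk : 1 ≤ k) : 2 ≤ F k := by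
  have := F_mono hk
  rwa [F_one] at this

lemma good_exists : ∀ k, 1 ≤ k → ∃ col : Fin (F k) → Fin (F k) → ℕ, Good k (F k) col := by
  intro k
  induction k using Nat.strong_induction_on with
  | _ k ih =>
    intro hk
    match k, hk with
    | 1, _ => exact F_one ▸ ⟨fun _ _ => 0, good1⟩
    | 2, _ => exact F_two ▸ ⟨fun i j => if crossB i j then 0 else 1, good2⟩
    | (j + 3), _ =>
      obtain ⟨col, hcol⟩ := ih (j + 1) (by omega) (by omega)
      obtain ⟨col', hcol'⟩ := good_step (F_pos _) col hcol
      have hFF : 5 * F (j + 1) = F (j + 3) := (F_add_two (j + 1)).symm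
      rw [← hFF]
      exact ⟨col', hcol'⟩

end EGallai

set_option maxHeartbeats 1000000 in
/-- The maximum number of vertices of an exact Gallai clique (every triangle has edges
of exactly two colors) colored with exactly k colors is 5^(k/2) for even k and
2·5^((k-1)/2) for odd k. -/
theorem exact_gallai_max_vertices (k : ℕ) (hk : 1 ≤ k) :
    IsGreatest
      {n : ℕ | ∃ (V Γ : Type) (_ : Fintype V) (_ : DecidableEq V) (_ : DecidableEq Γ)
          (col : V → V → Γ),
        (∀ u v, col u v = col v u) ∧
        (∀ u v w : V, u ≠ v → v ≠ w → u ≠ w →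
            (col u v = col v w ∨ col v w = col u w ∨ col u v = col u w) ∧
            ¬ (col u v = col v w ∧ col u v = col u w)) ∧
        ((Finset.univ.offDiag.image fun p : V × V => col p.1 p.2).card = k) ∧
        Fintype.card V = n}
      (if Even k then 5 ^ (k / 2) else 2 * 5 ^ ((k - 1) / 2)) := by
  rw [EGallai.F_eq_target k]
  constructor
  · obtain ⟨col, hsym, htri, himg⟩ := EGallai.good_exists k hk
    exact ⟨Fin (EGallai.F k), ℕ, inferInstance, inferInstance, inferInstance, col, hsym, htri,
      by rw [himg, Finset.card_range], by simp⟩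
  · rintro n ⟨W, Δ, fW, dW, dΔ, col, h1, h2, h3, h4⟩
    have hg : EGallai.Gallai col :=
      ⟨h1, fun u v w a b c => (h2 u v w a b c).1, fun u v w a b c => (h2 u v w a b c).2⟩
    have hcount := EGallai.count_main col hg (EGallai.gplus col hg) (Fintype.card W)
      Finset.univ (le_of_eq (Finset.card_univ))
    rw [Finset.card_univ] at hcount
    have hco : (EGallai.colsOn col Finset.univ).card = k := h3
    rw [hco] at hcount
    omega
end

section
/- If f : G → H is a full surjective graph homomorphism, then there is a unique full surjective homomorphism g : H → Ĝ with g ∘ f = r_G, where Ĝ is the reduced form of G and r_G : v ↦ N(v) the canonical map. In particular, f(u) = f(v) implies N(u) = N(v). -/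
/-- A full homomorphism between simple graphs: adjacency is both preserved and
reflected. -/
def IsFullHom {V W : Type*} (G : SimpleGraph V) (H : SimpleGraph W) (f : V → W) : Prop :=
  ∀ u v, G.Adj u v ↔ H.Adj (f u) (f v)

/-- A graph is reduced if distinct vertices have distinct neighborhoods. -/
def Reduced {V : Type*} (G : SimpleGraph V) : Prop :=
  ∀ u v : V, G.neighborSet u = G.neighborSet v → u = v

/-- The reduced form of G: vertices are the neighborhoods of vertices of G, with
N(u) adjacent to N(v) iff u and v are adjacent in G. -/
def ReducedForm {V : Type*} (G : SimpleGraph V) :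
    SimpleGraph {s : Set V // ∃ v, s = G.neighborSet v} where
  Adj s t := ∃ u v, (s : Set V) = G.neighborSet u ∧ (t : Set V) = G.neighborSet v ∧ G.Adj u v
  symm := by
    constructor
    rintro s t ⟨u, v, hu, hv, h⟩
    exact ⟨v, u, hv, hu, h.symm⟩
  loopless := by
    constructor
    rintro s ⟨u, v, hu, hv, h⟩
    have h2 : v ∈ G.neighborSet u := h
    rw [hu.symm.trans hv] at h2
    exact G.loopless.irrefl v h2

/-- The canonical map r_G : v ↦ N(v) onto the reduced form. -/
def reducedFormMap {V : Type*} (G : SimpleGraph V) (v : V) :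
    {s : Set V // ∃ v, s = G.neighborSet v} :=
  ⟨G.neighborSet v, v, rfl⟩

theorem reducedFormMap_surjective {V : Type*} (G : SimpleGraph V) :
    Function.Surjective (reducedFormMap G) := by
  rintro ⟨s, v, rfl⟩
  exact ⟨v, rfl⟩

theorem IsFullHom.neighborSet_eq_of_eq {V W : Type*} {G : SimpleGraph V} {H : SimpleGraph W}
    {f : V → W} (hf : IsFullHom G H f) {u v : V} (huv : f u = f v) :
    G.neighborSet u = G.neighborSet v := by
  ext w
  simp only [SimpleGraph.mem_neighborSet, hf u w, hf v w, huv]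

theorem isFullHom_reducedFormMap {V : Type*} (G : SimpleGraph V) :
    IsFullHom G (ReducedForm G) (reducedFormMap G) := by
  refine fun u v => ⟨fun h => ⟨u, v, rfl, rfl, h⟩, ?_⟩
  rintro ⟨u', v', hu, hv, h⟩
  have hv'u : G.Adj u v' := by
    change v' ∈ G.neighborSet u
    rw [show G.neighborSet u = G.neighborSet u' from hu]
    exact h
  have hvu : G.Adj v u := by
    change u ∈ G.neighborSet v
    rw [show G.neighborSet v = G.neighborSet v' from hv]
    exact hv'u.symm
  exact hvu.symm

theorem IsFullHom.of_comp {U V W : Type*} {F : SimpleGraph U} {G : SimpleGraph V}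
    {H : SimpleGraph W} {f : U → V} {g : V → W} (hf : IsFullHom F G f)
    (hsurj : Function.Surjective f) (hgf : IsFullHom F H (g ∘ f)) : IsFullHom G H g := by
  intro a b
  obtain ⟨u, rfl⟩ := hsurj a
  obtain ⟨v, rfl⟩ := hsurj b
  exact (hf u v).symm.trans (hgf u v)

/-- If f : G → H is a full surjective homomorphism, then there is a unique full
surjective homomorphism g : H → Ĝ with g ∘ f = r_G; in particular f(u) = f(v)
implies N(u) = N(v). -/
theorem fullSurjection_factors {V W : Type*} (G : SimpleGraph V) (H : SimpleGraph W)
    (f : V → W) (hfull : IsFullHom G H f) (hsurj : Function.Surjective f) :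
    (∃! g : W → {s : Set V // ∃ v, s = G.neighborSet v},
        IsFullHom H (ReducedForm G) g ∧ Function.Surjective g ∧
        g ∘ f = fun v => ⟨G.neighborSet v, v, rfl⟩) ∧
    (∀ u v : V, f u = f v → G.neighborSet u = G.neighborSet v) := by
  refine ⟨?_, fun u v => hfull.neighborSet_eq_of_eq⟩
  set g := reducedFormMap G ∘ Function.surjInv hsurj
  have hgf : g ∘ f = reducedFormMap G := funext fun v =>
    Subtype.ext (hfull.neighborSet_eq_of_eq (Function.surjInv_eq hsurj (f v)))
  refine ⟨g, ⟨?_, ?_, hgf⟩, fun g' hg' => ?_⟩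
  · exact hfull.of_comp hsurj (hgf ▸ isFullHom_reducedFormMap G)
  · exact Function.Surjective.of_comp (hgf ▸ reducedFormMap_surjective G)
  · exact hsurj.injective_comp_right (hg'.2.2.trans hgf.symm)
end
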